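/- arXiv:2307.13087 — 15 statements merged into one kernel-verified Lean document; each statement's English description precedes it below -/
import Mathlib

section
/- Let k ≥ 1, let L be a set of k×k real matrices, and let U ⊆ ℝ^k be an open set such that exp(t·l)·x ∈ U for every t ∈ ℝ, l ∈ L and x ∈ U. Let F : U → ℝ^k be continuously differentiable. Then the following are equivalent: (i) for every x ∈ U and every l ∈ L, the Fréchet derivative of F at x evaluated at l·x equals l·F(x); (ii) for every t ∈ ℝ, every l ∈ L and every x ∈ U, F(exp(t·l)·x) = exp(t·l)·F(x). -/
/-!
If `DF(y)(l y) = l F(y)` along the orbit `y(s) = exp(s l) x`, then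
`g(s) = exp(-s l) F(y(s))` has derivative `exp(-s l) (DF(y)(l y) - l F(y)) = 0`, because `l`
commutes with `exp(-s l)`; so `g` is constant, `g(t) = g(0) = F(x)`. Conversely, differentiating
`F(exp(t l) x) = exp(t l) F(x)` at `t = 0` gives `DF(x)(l x) = l F(x)`.
-/

open NormedSpace Matrix

section

-- Matrices carry no global norm; any one does here, as the statements only see the topology.
attribute [local instance] Matrix.linftyOpNormedAddCommGroup Matrix.linftyOpNormedSpace

theorem HasDerivAt.matrix_mulVec {m n : Type*} [Fintype m] [Fintype n] {A : ℝ → Matrix m n ℝ}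
    {v : ℝ → n → ℝ} {A' : Matrix m n ℝ} {v' : n → ℝ} {t : ℝ}
    (hA : HasDerivAt A A' t) (hv : HasDerivAt v v' t) :
    HasDerivAt (fun s => A s *ᵥ v s) (A t *ᵥ v' + A' *ᵥ v t) t :=
  ContinuousLinearMap.hasDerivAt_of_bilinear
    (B := (mulVecBilin ℝ ℝ : Matrix m n ℝ →ₗ[ℝ] (n → ℝ) →ₗ[ℝ] m → ℝ).toContinuousBilinearMap)
    (fun _ => hA) (fun _ => hv)

end

section MatrixFlow

variable {n : Type*} [Fintype n] [DecidableEq n]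

section

attribute [local instance] Matrix.linftyOpNormedRing Matrix.linftyOpNormedAlgebra

theorem HasDerivAt.exp_smul_mulVec (l : Matrix n n ℝ) {v : ℝ → n → ℝ} {v' : n → ℝ} {t : ℝ}
    (hv : HasDerivAt v v' t) :
    HasDerivAt (fun s => NormedSpace.exp (s • l) *ᵥ v s)
      (NormedSpace.exp (t • l) *ᵥ v' + l *ᵥ (NormedSpace.exp (t • l) *ᵥ v t)) t := by
  have hexp : HasDerivAt (fun s : ℝ => NormedSpace.exp (s • l)) (l * NormedSpace.exp (t • l)) t :=
    hasDerivAt_exp_smul_const' l t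
  simpa only [mulVec_mulVec] using hexp.matrix_mulVec hv

end

theorem hasDerivAt_exp_smul_mulVec (l : Matrix n n ℝ) (x : n → ℝ) (t : ℝ) :
    HasDerivAt (fun s => exp (s • l) *ᵥ x) (l *ᵥ (exp (t • l) *ᵥ x)) t := by
  simpa using HasDerivAt.exp_smul_mulVec l (hasDerivAt_const t x)

theorem Matrix.exp_smul_mul_exp_smul_neg (l : Matrix n n ℝ) (t : ℝ) :
    exp (t • l) * exp (t • -l) = 1 := by
  rw [← exp_add_of_commute _ _ (((Commute.refl l).neg_right.smul_right t).smul_left t),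
    smul_neg, add_neg_cancel, exp_zero]

theorem apply_exp_smul_mulVec_of_fderiv {F : (n → ℝ) → n → ℝ} {l : Matrix n n ℝ} {x : n → ℝ}
    (hF : ∀ s : ℝ, DifferentiableAt ℝ F (exp (s • l) *ᵥ x))
    (hcomm : ∀ s : ℝ, fderiv ℝ F (exp (s • l) *ᵥ x) (l *ᵥ (exp (s • l) *ᵥ x)) =
      l *ᵥ F (exp (s • l) *ᵥ x))
    (t : ℝ) :
    F (exp (t • l) *ᵥ x) = exp (t • l) *ᵥ F x := by
  set g : ℝ → n → ℝ := fun s => exp (s • -l) *ᵥ F (exp (s • l) *ᵥ x)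
  have hg : ∀ s, HasDerivAt g 0 s := by
    intro s
    have hFy : HasDerivAt (fun s => F (exp (s • l) *ᵥ x)) (l *ᵥ F (exp (s • l) *ᵥ x)) s :=
      hcomm s ▸ (hF s).hasFDerivAt.comp_hasDerivAt s (hasDerivAt_exp_smul_mulVec l x s)
    have hlexp : Commute l (exp (s • -l)) := ((Commute.refl l).neg_right.smul_right s).exp_right
    simpa only [mulVec_mulVec, ← hlexp.eq, Matrix.neg_mul, neg_mulVec, add_neg_cancel] using
      HasDerivAt.exp_smul_mulVec (-l) hFy
  have hgt : g t = F x := by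
    rw [is_const_of_deriv_eq_zero (fun s => (hg s).differentiableAt) (fun s => (hg s).deriv) t 0]
    simp [g]
  rw [← hgt, mulVec_mulVec, exp_smul_mul_exp_smul_neg, one_mulVec]

theorem fderiv_apply_mulVec_of_apply_exp_smul_mulVec {F : (n → ℝ) → n → ℝ} {l : Matrix n n ℝ}
    {x : n → ℝ} (hF : DifferentiableAt ℝ F x)
    (h : ∀ t : ℝ, F (exp (t • l) *ᵥ x) = exp (t • l) *ᵥ F x) :
    fderiv ℝ F x (l *ᵥ x) = l *ᵥ F x := by
  have hflow : HasDerivAt (fun t : ℝ => exp (t • l) *ᵥ x) (l *ᵥ x) 0 := by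
    simpa using hasDerivAt_exp_smul_mulVec l x 0
  have hlhs : HasDerivAt (fun t : ℝ => F (exp (t • l) *ᵥ x)) (fderiv ℝ F x (l *ᵥ x)) 0 :=
    hF.hasFDerivAt.comp_hasDerivAt_of_eq 0 hflow (by simp)
  have hrhs : HasDerivAt (fun t : ℝ => exp (t • l) *ᵥ F x) (l *ᵥ F x) 0 := by
    simpa using hasDerivAt_exp_smul_mulVec l (F x) 0
  rw [funext h] at hlhs
  exact hlhs.unique hrhs

end MatrixFlow

theorem stmt_0_general (k : ℕ)
    (L : Set (Matrix (Fin k) (Fin k) ℝ))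
    (U : Set (Fin k → ℝ)) (hU : IsOpen U)
    (hinv : ∀ t : ℝ, ∀ l ∈ L, ∀ x ∈ U, (NormedSpace.exp (t • l)).mulVec x ∈ U)
    (F : (Fin k → ℝ) → (Fin k → ℝ)) (hF : ContDiffOn ℝ 1 F U) :
    (∀ x ∈ U, ∀ l ∈ L, fderiv ℝ F x (l.mulVec x) = l.mulVec (F x)) ↔
      (∀ t : ℝ, ∀ l ∈ L, ∀ x ∈ U,
        F ((NormedSpace.exp (t • l)).mulVec x)
          = (NormedSpace.exp (t • l)).mulVec (F x)) := by
  have hdiff : ∀ y ∈ U, DifferentiableAt ℝ F y := fun y hy =>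
    (hF.differentiableOn one_ne_zero).differentiableAt (hU.mem_nhds hy)
  constructor
  · intro hcomm t l hl x hx
    exact apply_exp_smul_mulVec_of_fderiv (fun s => hdiff _ (hinv s l hl x hx))
      (fun s => hcomm _ (hinv s l hl x hx) l hl) t
  · intro hequiv x hx l hl
    exact fderiv_apply_mulVec_of_apply_exp_smul_mulVec (hdiff x hx) (fun t => hequiv t l hl x hx)

/-- Let `k ≥ 1`, `L` a set of `k × k` real matrices, and `U ⊆ ℝ^k`
an open set invariant under all flows `x ↦ exp(t • l) · x` for `l ∈ L`. Let
`F : U → ℝ^k` be continuously differentiable. Then the infinitesimal commutation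
condition `DF(x)(l·x) = l·F(x)` holds on `U` for all `l ∈ L` if and only if
`F(exp(t·l)·x) = exp(t·l)·F(x)` for all `t`, `l ∈ L`, `x ∈ U`. -/
theorem stmt_0 (k : ℕ) (hk : 1 ≤ k)
    (L : Set (Matrix (Fin k) (Fin k) ℝ))
    (U : Set (Fin k → ℝ)) (hU : IsOpen U)
    (hinv : ∀ t : ℝ, ∀ l ∈ L, ∀ x ∈ U, (NormedSpace.exp (t • l)).mulVec x ∈ U)
    (F : (Fin k → ℝ) → (Fin k → ℝ)) (hF : ContDiffOn ℝ 1 F U) :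
    (∀ x ∈ U, ∀ l ∈ L, fderiv ℝ F x (l.mulVec x) = l.mulVec (F x)) ↔
      (∀ t : ℝ, ∀ l ∈ L, ∀ x ∈ U,
        F ((NormedSpace.exp (t • l)).mulVec x)
          = (NormedSpace.exp (t • l)).mulVec (F x)) :=
  stmt_0_general k L U hU hinv F hF
end

section
/- Let n, N ≥ 1, let L be a set of n×n real matrices, and let U ⊆ (ℝ^n)^N be an open set. Suppose f¹, …, fⁿ : U → ℝ^n are differentiable maps such that (a) each f^j satisfies the joint equivariance equation for every l ∈ L, and (b) for every X ∈ U the vectors f¹(X), …, fⁿ(X) are linearly independent in ℝ^n. Let f : U → ℝ^n be a differentiable map satisfying the joint equivariance equation for every l ∈ L, and let φ¹, …, φⁿ : U → ℝ be differentiable functions with f(X) = Σ_{j=1}^n φ^j(X)·f^j(X) for all X ∈ U. Then each φ^j is jointly radial for every l ∈ L: for every X = (X_1,…,X_N) ∈ U and every l ∈ L, the derivative of φ^j at X evaluated at the vector (l·X_1, …, l·X_N) is zero. -/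
/-- A map `f : (ℝ^n)^N → ℝ^n` satisfies the joint equivariance equation for the
matrix `l` at every point of `U` if `Df(X)(l·X_1, …, l·X_N) = l·f(X)` on `U`. -/
def JointlyEquivariantOn (n N : ℕ) (l : Matrix (Fin n) (Fin n) ℝ)
    (U : Set (Fin N → Fin n → ℝ)) (f : (Fin N → Fin n → ℝ) → (Fin n → ℝ)) : Prop :=
  ∀ X ∈ U, fderiv ℝ f X (fun i => l.mulVec (X i)) = l.mulVec (f X)

/-- A function `φ : (ℝ^n)^N → ℝ` is jointly radial for the matrix `l` on `U` if
`Dφ(X)(l·X_1, …, l·X_N) = 0` on `U`. -/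
def JointlyRadialOn (n N : ℕ) (l : Matrix (Fin n) (Fin n) ℝ)
    (U : Set (Fin N → Fin n → ℝ)) (φ : (Fin N → Fin n → ℝ) → ℝ) : Prop :=
  ∀ X ∈ U, fderiv ℝ φ X (fun i => l.mulVec (X i)) = 0

/-!
Differentiate `f = ∑ⱼ φʲ • fʲ` in the direction `(l X₁, …, l X_N)` by the Leibniz rule. Since
every `fʲ` and `f` are equivariant, the terms `φʲ • l fʲ` already add up to `l f`, so
`∑ⱼ Dφʲ(X)(l X) • fʲ(X) = 0`, and pointwise linear independence kills every coefficient.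
-/

open Filter Topology

section LeibnizRule

variable {𝕜 ι E F : Type*} [NontriviallyNormedField 𝕜] [NormedAddCommGroup E] [NormedSpace 𝕜 E]
  [NormedAddCommGroup F] [NormedSpace 𝕜 F] {s : Finset ι} {φ : ι → E → 𝕜} {g : ι → E → F}
  {x : E}

theorem fderiv_sum_smul_apply (hφ : ∀ i ∈ s, DifferentiableAt 𝕜 (φ i) x)
    (hg : ∀ i ∈ s, DifferentiableAt 𝕜 (g i) x) (v : E) :
    fderiv 𝕜 (fun y => ∑ i ∈ s, φ i y • g i y) x v =
      ∑ i ∈ s, (φ i x • fderiv 𝕜 (g i) x v + fderiv 𝕜 (φ i) x v • g i x) := by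
  rw [fderiv_fun_sum (A := fun i y => φ i y • g i y) fun i hi => (hφ i hi).smul (hg i hi),
     _root_.sum_apply]
  refine Finset.sum_congr rfl fun i hi => ?_
  rw [fderiv_fun_smul (hφ i hi) (hg i hi)]
  simp

theorem sum_fderiv_smul_eq_zero_of_fderiv_apply_eq (A : F →ₗ[𝕜] F) {f : E → F} {v : E}
    (hf : f =ᶠ[𝓝 x] fun y => ∑ i ∈ s, φ i y • g i y)
    (hφ : ∀ i ∈ s, DifferentiableAt 𝕜 (φ i) x) (hg : ∀ i ∈ s, DifferentiableAt 𝕜 (g i) x)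
    (hfA : fderiv 𝕜 f x v = A (f x)) (hgA : ∀ i ∈ s, fderiv 𝕜 (g i) x v = A (g i x)) :
    ∑ i ∈ s, fderiv 𝕜 (φ i) x v • g i x = 0 := by
  have hleibniz : A (f x) =
      ∑ i ∈ s, φ i x • A (g i x) + ∑ i ∈ s, fderiv 𝕜 (φ i) x v • g i x := by
    rw [← hfA, hf.fderiv_eq, fderiv_sum_smul_apply hφ hg, Finset.sum_add_distrib]
    congr 1
    exact Finset.sum_congr rfl fun i hi => by rw [hgA i hi]
  have hA : A (f x) = ∑ i ∈ s, φ i x • A (g i x) := by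
    simp only [hf.eq_of_nhds, map_sum, map_smul]
  rwa [hA, left_eq_add] at hleibniz

end LeibnizRule

theorem stmt_3_general (n N : ℕ)
    (L : Set (Matrix (Fin n) (Fin n) ℝ))
    (U : Set (Fin N → Fin n → ℝ)) (hU : IsOpen U)
    (fs : Fin n → (Fin N → Fin n → ℝ) → (Fin n → ℝ))
    (hfs_diff : ∀ j, ∀ X ∈ U, DifferentiableAt ℝ (fs j) X)
    (hfs_equiv : ∀ j, ∀ l ∈ L, JointlyEquivariantOn n N l U (fs j))
    (hfs_indep : ∀ X ∈ U, LinearIndependent ℝ (fun j => fs j X))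
    (f : (Fin N → Fin n → ℝ) → (Fin n → ℝ))
    (hf_equiv : ∀ l ∈ L, JointlyEquivariantOn n N l U f)
    (φ : Fin n → (Fin N → Fin n → ℝ) → ℝ)
    (hφ_diff : ∀ j, ∀ X ∈ U, DifferentiableAt ℝ (φ j) X)
    (hsum : ∀ X ∈ U, f X = ∑ j, φ j X • fs j X) :
    ∀ j, ∀ l ∈ L, JointlyRadialOn n N l U (φ j) := by
  intro j l hl X hX
  have hf_eq : f =ᶠ[𝓝 X] fun Y => ∑ k, φ k Y • fs k Y :=
    eventually_of_mem (hU.mem_nhds hX) hsum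
  have hcancel := sum_fderiv_smul_eq_zero_of_fderiv_apply_eq l.mulVecLin hf_eq
    (fun k _ => hφ_diff k X hX) (fun k _ => hfs_diff k X hX) (hf_equiv l hl X hX)
    (fun k _ => hfs_equiv k l hl X hX)
  exact Fintype.linearIndependent_iff.mp (hfs_indep X hX) _ hcancel j

/-- Given `n` pointwise independent jointly equivariant solutions
`f¹, …, fⁿ` on an open set `U ⊆ (ℝ^n)^N`, the coefficients `φ¹, …, φⁿ` of any jointly
equivariant solution `f = Σ_j φ^j • f^j` are jointly radial for every `l ∈ L`. -/
theorem stmt_3 (n N : ℕ) (hn : 1 ≤ n) (hN : 1 ≤ N)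
    (L : Set (Matrix (Fin n) (Fin n) ℝ))
    (U : Set (Fin N → Fin n → ℝ)) (hU : IsOpen U)
    (fs : Fin n → (Fin N → Fin n → ℝ) → (Fin n → ℝ))
    (hfs_diff : ∀ j, ∀ X ∈ U, DifferentiableAt ℝ (fs j) X)
    (hfs_equiv : ∀ j, ∀ l ∈ L, JointlyEquivariantOn n N l U (fs j))
    (hfs_indep : ∀ X ∈ U, LinearIndependent ℝ (fun j => fs j X))
    (f : (Fin N → Fin n → ℝ) → (Fin n → ℝ))
    (hf_diff : ∀ X ∈ U, DifferentiableAt ℝ f X)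
    (hf_equiv : ∀ l ∈ L, JointlyEquivariantOn n N l U f)
    (φ : Fin n → (Fin N → Fin n → ℝ) → ℝ)
    (hφ_diff : ∀ j, ∀ X ∈ U, DifferentiableAt ℝ (φ j) X)
    (hsum : ∀ X ∈ U, f X = ∑ j, φ j X • fs j X) :
    ∀ j, ∀ l ∈ L, JointlyRadialOn n N l U (φ j) :=
  stmt_3_general n N L U hU fs hfs_diff hfs_equiv hfs_indep f hf_equiv φ hφ_diff hsum
end

section
/- Let n ≥ 1 and N ≥ n, and let L be a set of n×n real matrices. Let V = {(X_1,…,X_N) ∈ (ℝ^n)^N : X_1, …, X_n are linearly independent in ℝ^n}. If f : V → ℝ^n is a differentiable map satisfying the joint equivariance equation for every l ∈ L, then there exist differentiable functions φ¹, …, φⁿ : V → ℝ such that f(X) = Σ_{i=1}^n φ^i(X)·X_i for every X ∈ V, and each φ^i is jointly radial for every l ∈ L. -/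
open scoped Matrix Topology

/-!
Where `X_1, …, X_n` are linearly independent they form a basis of `ℝ^n`, and the
coordinates `φ^i(X)` of `f(X)` in this basis are given by Cramer's rule, hence are
differentiable. Differentiating `f = Σ φ^i X_i` in the direction `(l·X_1, …, l·X_N)` gives
`Df(X)(l·X) = Σ φ^i(X) l·X_i + Σ Dφ^i(X)(l·X) X_i`, while equivariance says the left side is
`l·f(X) = Σ φ^i(X) l·X_i`. Hence `Σ Dφ^i(X)(l·X) X_i = 0`, and independence of the `X_i`
forces every `Dφ^i(X)(l·X)` to vanish.
-/

section Calculus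

variable {𝕜 : Type*} [NontriviallyNormedField 𝕜] {E F : Type*}
  [NormedAddCommGroup E] [NormedSpace 𝕜 E] [NormedAddCommGroup F] [NormedSpace 𝕜 F]

theorem DifferentiableAt.matrix_det {ι : Type*} [Fintype ι] [DecidableEq ι]
    {A : E → Matrix ι ι 𝕜} {x : E} (hA : ∀ i j, DifferentiableAt 𝕜 (fun y => A y i j) x) :
    DifferentiableAt 𝕜 (fun y => (A y).det) x := by
  simp only [Matrix.det_apply']
  exact DifferentiableAt.fun_sum fun σ _ =>
    ((HasFDerivAt.finsetProd fun i _ => (hA (σ i) i).hasFDerivAt).differentiableAt).const_mul _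

theorem fderiv_apply_of_eventuallyEq_sum_smul {ι : Type*} [Fintype ι] {f : E → F}
    {φ : ι → E → 𝕜} {v : ι → E →L[𝕜] F} {x : E} (hφ : ∀ i, DifferentiableAt 𝕜 (φ i) x)
    (hf : f =ᶠ[𝓝 x] fun y => ∑ i, φ i y • v i y) (w : E) :
    fderiv 𝕜 f x w = ∑ i, (φ i x • v i w + fderiv 𝕜 (φ i) x w • v i x) := by
  rw [hf.fderiv_eq,
    fderiv_fun_sum (A := fun i y => φ i y • v i y) fun i _ => (hφ i).smul (v i).differentiableAt,
    sum_apply]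
  refine Finset.sum_congr rfl fun i _ => ?_
  rw [fderiv_fun_smul (hφ i) (v i).differentiableAt, (v i).fderiv]
  simp

theorem fderiv_coeff_apply_eq_zero_of_linearIndependent {ι : Type*} [Fintype ι] {f : E → F}
    {φ : ι → E → 𝕜} {v : ι → E →L[𝕜] F} {x w : E} (hφ : ∀ i, DifferentiableAt 𝕜 (φ i) x)
    (hf : f =ᶠ[𝓝 x] fun y => ∑ i, φ i y • v i y) (hv : LinearIndependent 𝕜 fun i => v i x)
    (hw : fderiv 𝕜 f x w = ∑ i, φ i x • v i w) (i : ι) :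
    fderiv 𝕜 (φ i) x w = 0 := by
  rw [fderiv_apply_of_eventuallyEq_sum_smul hφ hf, Finset.sum_add_distrib, add_eq_left] at hw
  exact Fintype.linearIndependent_iff.mp hv _ hw i

end Calculus

section Cramer

variable {ι : Type*} [Fintype ι] [DecidableEq ι] {K : Type*} [Field K]

noncomputable def cramerCoeff (v : ι → ι → K) (b : ι → K) (i : ι) : K :=
  ((Matrix.of v).updateRow i b).det / (Matrix.of v).det

theorem LinearIndependent.det_of_ne_zero {v : ι → ι → K} (hv : LinearIndependent K v) :
    (Matrix.of v).det ≠ 0 := by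
  rw [← isUnit_iff_ne_zero, ← Matrix.isUnit_iff_isUnit_det]
  exact Matrix.linearIndependent_rows_iff_isUnit.mp hv

theorem sum_cramerCoeff_smul {v : ι → ι → K}
    (hv : LinearIndependent K v) (b : ι → K) : ∑ i, cramerCoeff v b i • v i = b := by
  have hcramer := Matrix.mulVec_cramer (Matrix.of v)ᵀ b
  simp only [Matrix.mulVec_transpose, Matrix.vecMul_eq_sum, Matrix.det_transpose,
    Matrix.cramer_transpose_apply] at hcramer
  simp only [cramerCoeff, div_eq_inv_mul, mul_smul, ← Finset.smul_sum]
  rw [inv_smul_eq_iff₀ hv.det_of_ne_zero]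
  exact hcramer

variable {𝕜 : Type*} [NontriviallyNormedField 𝕜] {E : Type*}
  [NormedAddCommGroup E] [NormedSpace 𝕜 E]

theorem DifferentiableAt.cramerCoeff {v : E → ι → ι → 𝕜} {b : E → ι → 𝕜} {x : E}
    (hv : ∀ i j, DifferentiableAt 𝕜 (fun y => v y i j) x)
    (hb : ∀ j, DifferentiableAt 𝕜 (fun y => b y j) x) (hvx : LinearIndependent 𝕜 (v x))
    (i : ι) : DifferentiableAt 𝕜 (fun y => cramerCoeff (v y) (b y) i) x := by
  have hnum : DifferentiableAt 𝕜 (fun y => ((Matrix.of (v y)).updateRow i (b y)).det) x := by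
    refine .matrix_det fun k j => ?_
    simp only [Matrix.updateRow_apply]
    split_ifs
    · exact hb j
    · exact hv k j
  have hden : DifferentiableAt 𝕜 (fun y => (Matrix.of (v y)).det) x := .matrix_det hv
  simp only [_root_.cramerCoeff, div_eq_mul_inv]
  exact hnum.mul <| hden.inv hvx.det_of_ne_zero

end Cramer

theorem stmt_5_general (n N : ℕ) (hnN : n ≤ N)
    (L : Set (Matrix (Fin n) (Fin n) ℝ))
    (V : Set (Fin N → Fin n → ℝ))
    (hV : V = {X | LinearIndependent ℝ (fun j : Fin n => X (Fin.castLE hnN j))})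
    (f : (Fin N → Fin n → ℝ) → (Fin n → ℝ))
    (hf_diff : ∀ X ∈ V, DifferentiableAt ℝ f X)
    (hf_equiv : ∀ l ∈ L, JointlyEquivariantOn n N l V f) :
    ∃ φ : Fin n → (Fin N → Fin n → ℝ) → ℝ,
      (∀ i, ∀ X ∈ V, DifferentiableAt ℝ (φ i) X) ∧
      (∀ X ∈ V, f X = ∑ i, φ i X • X (Fin.castLE hnN i)) ∧
      (∀ i, ∀ l ∈ L, JointlyRadialOn n N l V (φ i)) := by
  subst hV
  set col : Fin n → (Fin N → Fin n → ℝ) →L[ℝ] Fin n → ℝ :=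
    fun j => ContinuousLinearMap.proj (Fin.castLE hnN j)
  set φ := fun i X => cramerCoeff (fun j => col j X) (f X) i
  have hφ_diff : ∀ i, ∀ X ∈ {X | LinearIndependent ℝ fun j => col j X},
      DifferentiableAt ℝ (φ i) X := fun i X hX =>
    .cramerCoeff (v := fun X j => col j X) (fun _ _ => by fun_prop)
      (differentiableAt_pi.mp (hf_diff X hX)) hX i
  have hrep : ∀ X ∈ {X | LinearIndependent ℝ fun j => col j X},
      f X = ∑ i, φ i X • col i X := fun X hX => (sum_cramerCoeff_smul hX (f X)).symm
  refine ⟨φ, hφ_diff, hrep, fun i l hl X hX => ?_⟩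
  have hopen : IsOpen {X | LinearIndependent ℝ fun j => col j X} :=
    isOpen_setOfPred_linearIndependent.preimage (continuous_pi fun j => (col j).continuous)
  refine fderiv_coeff_apply_eq_zero_of_linearIndependent (fun i => hφ_diff i X hX)
    (Filter.eventually_of_mem (hopen.mem_nhds hX) hrep) hX ?_ i
  rw [hf_equiv l hl X hX, hrep X hX, Matrix.mulVec_sum]
  simp only [Matrix.mulVec_smul]
  rfl

/-- If `N ≥ n` and `f` is jointly equivariant for every `l ∈ L`
on the set `V` where `X_1, …, X_n` are linearly independent, then `f` is a
combination `f(X) = Σ_i φ^i(X) • X_i` of the elementary solutions `X_1, …, X_n`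
with differentiable, jointly radial coefficients `φ^i`. -/
theorem stmt_5 (n N : ℕ) (hn : 1 ≤ n) (hnN : n ≤ N)
    (L : Set (Matrix (Fin n) (Fin n) ℝ))
    (V : Set (Fin N → Fin n → ℝ))
    (hV : V = {X | LinearIndependent ℝ (fun j : Fin n => X (Fin.castLE hnN j))})
    (f : (Fin N → Fin n → ℝ) → (Fin n → ℝ))
    (hf_diff : ∀ X ∈ V, DifferentiableAt ℝ f X)
    (hf_equiv : ∀ l ∈ L, JointlyEquivariantOn n N l V f) :
    ∃ φ : Fin n → (Fin N → Fin n → ℝ) → ℝ,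
      (∀ i, ∀ X ∈ V, DifferentiableAt ℝ (φ i) X) ∧
      (∀ X ∈ V, f X = ∑ i, φ i X • X (Fin.castLE hnN i)) ∧
      (∀ i, ∀ l ∈ L, JointlyRadialOn n N l V (φ i)) :=
  stmt_5_general n N hnN L V hV f hf_diff hf_equiv
end

section
/- Let n, N ≥ 1 and let L be a set of n×n real matrices. Let c_1, …, c_n be n×n real matrices, each commuting with every l ∈ L, and let V_0 ⊆ ℝ^n be an open set such that for every x ∈ V_0 the vectors c_1·x, …, c_n·x are linearly independent in ℝ^n. Fix an index i ∈ {1,…,N} and set V = {(X_1,…,X_N) ∈ (ℝ^n)^N : X_i ∈ V_0}. If f : V → ℝ^n is a differentiable map satisfying the joint equivariance equation for every l ∈ L, then there exist differentiable functions φ¹, …, φⁿ : V → ℝ, each jointly radial for every l ∈ L, such that f(X) = Σ_{j=1}^n φ^j(X)·(c_j·X_i) for every X ∈ V. -/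
/-!
On `V` the vectors `c_j·X_i` form a basis of `ℝⁿ`, so `f` has unique coordinates `φʲ` in it; they
are differentiable because they are obtained by inverting the differentiable family of linear maps
`a ↦ ∑ a_j • c_j·X_i`. Since `c_j` commutes with `l`, each `X ↦ c_j·X_i` is itself jointly
equivariant, so differentiating `f = ∑ φʲ • c_j·X_i` in the direction `(l·X_k)_k` and using the
equivariance of `f` leaves `∑ Dφʲ(X)(l·X) • c_j·X_i = 0`; linear independence kills each term.
-/

open Module Filter Topology Matrix

section LinearCombination

variable {ι E F : Type*} [Fintype ι] [NormedAddCommGroup E] [NormedSpace ℝ E]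
  [NormedAddCommGroup F] [NormedSpace ℝ F]

noncomputable def linearCombinationCLM (v : ι → F) : (ι → ℝ) →L[ℝ] F :=
  ∑ j, (ContinuousLinearMap.proj j).smulRight (v j)

@[simp]
lemma linearCombinationCLM_apply (v : ι → F) (a : ι → ℝ) :
    linearCombinationCLM v a = ∑ j, a j • v j := by
  simp [linearCombinationCLM]

lemma differentiableAt_linearCombinationCLM {v : ι → E → F} {x : E}
    (hv : ∀ j, DifferentiableAt ℝ (v j) x) :
    DifferentiableAt ℝ (fun y => linearCombinationCLM fun j => v j y) x :=
  DifferentiableAt.fun_sum fun j _ =>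
    (ContinuousLinearMap.smulRightL ℝ (ι → ℝ) F (ContinuousLinearMap.proj j)).differentiableAt.comp
      x (hv j)

lemma fderiv_coeff_eq_zero_of_linearIndependent {f : E → F} {φ : ι → E → ℝ} {v : ι → E → F}
    {x w : E} (A : F →ₗ[ℝ] F)
    (hrepr : f =ᶠ[𝓝 x] fun y => ∑ j, φ j y • v j y)
    (hφ : ∀ j, DifferentiableAt ℝ (φ j) x) (hv : ∀ j, DifferentiableAt ℝ (v j) x)
    (hvA : ∀ j, fderiv ℝ (v j) x w = A (v j x)) (hfA : fderiv ℝ f x w = A (f x))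
    (hli : LinearIndependent ℝ fun j => v j x) (j : ι) :
    fderiv ℝ (φ j) x w = 0 := by
  have hderiv : fderiv ℝ f x w = ∑ j, (φ j x • A (v j x) + fderiv ℝ (φ j) x w • v j x) := by
    rw [hrepr.fderiv_eq,
      fderiv_fun_sum (A := fun j y => φ j y • v j y) fun j _ => (hφ j).smul (hv j),
      _root_.sum_apply]
    refine Finset.sum_congr rfl fun j _ => ?_
    rw [fderiv_fun_smul (hφ j) (hv j)]
    simp [hvA]
  have hA : A (f x) = ∑ j, φ j x • A (v j x) := by
    simp [hrepr.eq_of_nhds]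
  rw [hderiv, hA, Finset.sum_add_distrib, add_eq_left] at hfA
  exact Fintype.linearIndependent_iff.mp hli _ hfA j

variable [FiniteDimensional ℝ F]

lemma exists_continuousLinearEquiv_eq_linearCombinationCLM {v : ι → F}
    (hli : LinearIndependent ℝ v) (hcard : Fintype.card ι = finrank ℝ F) :
    ∃ e : (ι → ℝ) ≃L[ℝ] F, (e : (ι → ℝ) →L[ℝ] F) = linearCombinationCLM v := by
  let b := basisOfLinearIndependentOfCardEqFinrank' v hli hcard
  refine ⟨b.equivFun.symm.toContinuousLinearEquiv, ?_⟩
  ext a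
  simp [b]

/-- Junk value `0` unless `linearCombinationCLM v` is invertible. -/
noncomputable def coords (v : ι → F) (w : F) : ι → ℝ :=
  (linearCombinationCLM v).inverse w

lemma sum_coords_smul {v : ι → F} (hli : LinearIndependent ℝ v)
    (hcard : Fintype.card ι = finrank ℝ F) (w : F) :
    ∑ j, coords v w j • v j = w := by
  obtain ⟨e, he⟩ := exists_continuousLinearEquiv_eq_linearCombinationCLM hli hcard
  rw [← linearCombinationCLM_apply, coords, ← he, ContinuousLinearMap.inverse_equiv]
  exact e.apply_symm_apply w

lemma differentiableAt_coords {v : ι → E → F} {f : E → F} {x : E}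
    (hv : ∀ j, DifferentiableAt ℝ (v j) x) (hf : DifferentiableAt ℝ f x)
    (hli : LinearIndependent ℝ fun j => v j x) (hcard : Fintype.card ι = finrank ℝ F) :
    DifferentiableAt ℝ (fun y => coords (fun j => v j y) (f y)) x := by
  obtain ⟨e, he⟩ := exists_continuousLinearEquiv_eq_linearCombinationCLM hli hcard
  have hinv :
      DifferentiableAt ℝ ContinuousLinearMap.inverse (linearCombinationCLM fun j => v j x) :=
    he ▸ (contDiffAt_map_inverse e).differentiableAt one_ne_zero
  exact (hinv.comp x (differentiableAt_linearCombinationCLM hv)).clm_apply hf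

end LinearCombination

lemma hasFDerivAt_mulVec_apply {m ι : Type*} [Fintype m]
    (M : Matrix m m ℝ) (i : ι) (X : ι → m → ℝ) :
    HasFDerivAt (fun Y : ι → m → ℝ => M *ᵥ Y i)
      ((LinearMap.toContinuousLinearMap M.mulVecLin).comp (ContinuousLinearMap.proj i)) X :=
  ((LinearMap.toContinuousLinearMap M.mulVecLin).comp
    (ContinuousLinearMap.proj (R := ℝ) (φ := fun _ : ι => m → ℝ) i)).hasFDerivAt

theorem stmt_6_general (n N : ℕ)
    (L : Set (Matrix (Fin n) (Fin n) ℝ))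
    (c : Fin n → Matrix (Fin n) (Fin n) ℝ)
    (hc : ∀ j, ∀ l ∈ L, c j * l = l * c j)
    (V₀ : Set (Fin n → ℝ)) (hV₀ : IsOpen V₀)
    (hindep : ∀ x ∈ V₀, LinearIndependent ℝ (fun j => (c j).mulVec x))
    (i : Fin N)
    (V : Set (Fin N → Fin n → ℝ)) (hV : V = {X | X i ∈ V₀})
    (f : (Fin N → Fin n → ℝ) → (Fin n → ℝ))
    (hf_diff : ∀ X ∈ V, DifferentiableAt ℝ f X)
    (hf_equiv : ∀ l ∈ L, JointlyEquivariantOn n N l V f) :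
    ∃ φ : Fin n → (Fin N → Fin n → ℝ) → ℝ,
      (∀ j, ∀ X ∈ V, DifferentiableAt ℝ (φ j) X) ∧
      (∀ j, ∀ l ∈ L, JointlyRadialOn n N l V (φ j)) ∧
      (∀ X ∈ V, f X = ∑ j, φ j X • (c j).mulVec (X i)) := by
  have hVopen : IsOpen V := hV ▸ hV₀.preimage (continuous_apply i)
  have hcard : Fintype.card (Fin n) = finrank ℝ (Fin n → ℝ) := by simp
  let v : Fin n → (Fin N → Fin n → ℝ) → Fin n → ℝ := fun j X => c j *ᵥ X i
  have hv : ∀ j X, HasFDerivAt (v j) _ X := fun j => hasFDerivAt_mulVec_apply (c j) i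
  have hli : ∀ X ∈ V, LinearIndependent ℝ fun j => v j X := fun X hX =>
    hindep _ (by simpa [hV] using hX)
  let φ j X := coords (fun k => v k X) (f X) j
  have hrepr : ∀ X ∈ V, f X = ∑ j, φ j X • v j X := fun X hX =>
    (sum_coords_smul (hli X hX) hcard _).symm
  have hφ : ∀ j, ∀ X ∈ V, DifferentiableAt ℝ (φ j) X := fun j X hX =>
    differentiableAt_pi.mp (differentiableAt_coords (fun k => (hv k X).differentiableAt)
      (hf_diff X hX) (hli X hX) hcard) j
  refine ⟨φ, hφ, fun j l hl X hX => ?_, hrepr⟩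
  refine fderiv_coeff_eq_zero_of_linearIndependent l.mulVecLin
    (eventuallyEq_of_mem (hVopen.mem_nhds hX) hrepr) (fun k => hφ k X hX)
    (fun k => (hv k X).differentiableAt) (fun k => ?_) (hf_equiv l hl X hX) (hli X hX) j
  simp [(hv k X).fderiv, v, Matrix.mulVec_mulVec, hc k l hl]

/-- Let `c_1, …, c_n` be matrices commuting with every `l ∈ L`,
and let `V_0 ⊆ ℝ^n` be an open set on which `c_1·x, …, c_n·x` are linearly
independent. Then every jointly equivariant `f` on `V = {X : X_i ∈ V_0}` is a
combination `f(X) = Σ_j φ^j(X) • (c_j·X_i)` with differentiable, jointly radial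
coefficients. -/
theorem stmt_6 (n N : ℕ) (hn : 1 ≤ n) (hN : 1 ≤ N)
    (L : Set (Matrix (Fin n) (Fin n) ℝ))
    (c : Fin n → Matrix (Fin n) (Fin n) ℝ)
    (hc : ∀ j, ∀ l ∈ L, c j * l = l * c j)
    (V₀ : Set (Fin n → ℝ)) (hV₀ : IsOpen V₀)
    (hindep : ∀ x ∈ V₀, LinearIndependent ℝ (fun j => (c j).mulVec x))
    (i : Fin N)
    (V : Set (Fin N → Fin n → ℝ)) (hV : V = {X | X i ∈ V₀})
    (f : (Fin N → Fin n → ℝ) → (Fin n → ℝ))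
    (hf_diff : ∀ X ∈ V, DifferentiableAt ℝ f X)
    (hf_equiv : ∀ l ∈ L, JointlyEquivariantOn n N l V f) :
    ∃ φ : Fin n → (Fin N → Fin n → ℝ) → ℝ,
      (∀ j, ∀ X ∈ V, DifferentiableAt ℝ (φ j) X) ∧
      (∀ j, ∀ l ∈ L, JointlyRadialOn n N l V (φ j)) ∧
      (∀ X ∈ V, f X = ∑ j, φ j X • (c j).mulVec (X i)) :=
  stmt_6_general n N L c hc V₀ hV₀ hindep i V hV f hf_diff hf_equiv
end

section
/- Let n, N ≥ 1 and let A be a skew-symmetric n×n real matrix (Aᵀ = −A). Let F_1, …, F_N : (ℝ^n)^N → ℝ^n be differentiable maps, each satisfying the joint equivariance equation for A. Then the function ψ : (ℝ^n)^N → ℝ defined by ψ(X) = Σ_{i=1}^N ‖F_i(X)‖², where ‖·‖ is the Euclidean norm, is jointly radial for A: for every X = (X_1,…,X_N), the derivative of ψ at X evaluated at (A·X_1, …, A·X_N) is zero. -/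
/-!
Differentiating `ψ = Σᵢ ‖Fᵢ‖²` in the direction `(A·X₁, …, A·X_N)` and using equivariance, each
summand becomes `2 ⟨Fᵢ(X), A Fᵢ(X)⟩`, which vanishes because the quadratic form of a
skew-symmetric matrix is zero.
-/

open Matrix

theorem Matrix.dotProduct_mulVec_self_eq_zero {ι : Type*} [Fintype ι] {A : Matrix ι ι ℝ}
    (hA : Aᵀ = -A) (u : ι → ℝ) : u ⬝ᵥ (A *ᵥ u) = 0 := by
  have h : u ⬝ᵥ (A *ᵥ u) = -(u ⬝ᵥ (A *ᵥ u)) :=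
    calc u ⬝ᵥ (A *ᵥ u) = (Aᵀ *ᵥ u) ⬝ᵥ u := by
          rw [dotProduct_mulVec, ← vecMul_transpose, transpose_transpose]
      _ = -(u ⬝ᵥ (A *ᵥ u)) := by rw [hA, neg_mulVec, neg_dotProduct, dotProduct_comm]
  linarith

section SumSq

variable {E ι : Type*} [NormedAddCommGroup E] [NormedSpace ℝ E] [Fintype ι]

theorem HasFDerivAt.sum_sq {f : E → ι → ℝ} {f' : E →L[ℝ] ι → ℝ} {x : E}
    (hf : HasFDerivAt f f' x) :
    HasFDerivAt (fun y => ∑ j, f y j ^ 2)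
      (∑ j, (2 * f x j) • (ContinuousLinearMap.proj j ∘L f')) x := by
  refine HasFDerivAt.fun_sum fun j _ => ?_
  simpa using ((ContinuousLinearMap.proj (R := ℝ) (φ := fun _ : ι => ℝ) j).hasFDerivAt.comp
    x hf).pow 2

theorem fderiv_sum_sq_apply {f : E → ι → ℝ} {x : E} (hf : DifferentiableAt ℝ f x) (v : E) :
    fderiv ℝ (fun y => ∑ j, f y j ^ 2) x v = 2 * (f x ⬝ᵥ fderiv ℝ f x v) := by
  simp [hf.hasFDerivAt.sum_sq.fderiv, dotProduct, Finset.mul_sum, mul_assoc]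

theorem fderiv_sum_sq_apply_eq_zero_of_skew {f : E → ι → ℝ} {x v : E} {A : Matrix ι ι ℝ}
    (hA : Aᵀ = -A) (hf : DifferentiableAt ℝ f x) (hv : fderiv ℝ f x v = A *ᵥ f x) :
    fderiv ℝ (fun y => ∑ j, f y j ^ 2) x v = 0 := by
  rw [fderiv_sum_sq_apply hf, hv, dotProduct_mulVec_self_eq_zero hA, mul_zero]

end SumSq

theorem stmt_7_general (n N : ℕ)
    (A : Matrix (Fin n) (Fin n) ℝ) (hA : A.transpose = -A)
    (F : Fin N → (Fin N → Fin n → ℝ) → (Fin n → ℝ))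
    (hF_diff : ∀ i, Differentiable ℝ (F i))
    (hF_equiv : ∀ i, ∀ X : Fin N → Fin n → ℝ,
      fderiv ℝ (F i) X (fun k => A.mulVec (X k)) = A.mulVec (F i X)) :
    ∀ X : Fin N → Fin n → ℝ,
      fderiv ℝ (fun Y : Fin N → Fin n → ℝ => ∑ i, ∑ j, (F i Y j) ^ 2) X
        (fun k => A.mulVec (X k)) = 0 := by
  intro X
  have hsq_diff (i : Fin N) : DifferentiableAt ℝ (fun Y => ∑ j, F i Y j ^ 2) X := by
    fun_prop
  rw [fderiv_fun_sum fun i _ => hsq_diff i, _root_.sum_apply]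
  exact Finset.sum_eq_zero fun i _ =>
    fderiv_sum_sq_apply_eq_zero_of_skew hA (hF_diff i X) (hF_equiv i X)

/-- If `A` is skew-symmetric and each differentiable
`F_i : (ℝ^n)^N → ℝ^n` satisfies the joint equivariance equation for `A`, then
`ψ(X) = Σ_i ‖F_i(X)‖²` (squared Euclidean norms) is jointly radial for `A`:
its derivative at `X` in the direction `(A·X_1, …, A·X_N)` vanishes. -/
theorem stmt_7 (n N : ℕ) (hn : 1 ≤ n) (hN : 1 ≤ N)
    (A : Matrix (Fin n) (Fin n) ℝ) (hA : A.transpose = -A)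
    (F : Fin N → (Fin N → Fin n → ℝ) → (Fin n → ℝ))
    (hF_diff : ∀ i, Differentiable ℝ (F i))
    (hF_equiv : ∀ i, ∀ X : Fin N → Fin n → ℝ,
      fderiv ℝ (F i) X (fun k => A.mulVec (X k)) = A.mulVec (F i X)) :
    ∀ X : Fin N → Fin n → ℝ,
      fderiv ℝ (fun Y : Fin N → Fin n → ℝ => ∑ i, ∑ j, (F i Y j) ^ 2) X
        (fun k => A.mulVec (X k)) = 0 :=
  stmt_7_general n N A hA F hF_diff hF_equiv
end

section
/- Let l ∈ M_n(ℝ) and N ≥ 2. Let g : (ℝ^n)^(N−1) → ℝ^n be differentiable, and define f : (ℝ^n)^N → ℝ^n by f(X_1,…,X_N) = g(X_2 − X_1, …, X_N − X_1). Then f satisfies the joint equivariance equation for l if and only if for every Z = (Z_2,…,Z_N) ∈ (ℝ^n)^(N−1) the Fréchet derivative of g at Z evaluated at (l·Z_2, …, l·Z_N) equals l·g(Z). -/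
/-!
Writing `φ X = (X_{i+1} - X_0)_i` for the difference map, `f = g ∘ φ` with `φ` linear, so by the
chain rule `Df(X)(l·X) = Dg(φ X)(φ(l·X)) = Dg(φ X)(l·φ X)`, since `φ` commutes with applying `l`
coordinatewise. Hence the equation for `f` at `X` is the equation for `g` at `φ X`, and `φ` is
surjective.
-/

open Function

section DerivCompSurjective

variable {𝕜 : Type*} [NontriviallyNormedField 𝕜]
  {E F G : Type*} [NormedAddCommGroup E] [NormedSpace 𝕜 E] [NormedAddCommGroup F]
  [NormedSpace 𝕜 F] [NormedAddCommGroup G] [NormedSpace 𝕜 G]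

theorem fderiv_comp_clm_apply_eq (φ : E →L[𝕜] F) {g : F → G} (hg : Differentiable 𝕜 g)
    (x v : E) : fderiv 𝕜 (g ∘ φ) x v = fderiv 𝕜 g (φ x) (φ v) := by
  rw [fderiv_comp x (hg _) φ.differentiableAt, φ.fderiv, ContinuousLinearMap.comp_apply]

theorem forall_fderiv_comp_clm_apply_iff (φ : E →L[𝕜] F) (hφ : Surjective φ)
    {g : F → G} (hg : Differentiable 𝕜 g) {LE : E → E} {LF : F → F} (LG : G → G)
    (hL : ∀ x, φ (LE x) = LF (φ x)) :
    (∀ x, fderiv 𝕜 (g ∘ φ) x (LE x) = LG ((g ∘ φ) x)) ↔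
      ∀ z, fderiv 𝕜 g z (LF z) = LG (g z) := by
  simp only [fderiv_comp_clm_apply_eq φ hg, hL, comp_apply]
  exact (hφ.forall (p := fun z => fderiv 𝕜 g z (LF z) = LG (g z))).symm

end DerivCompSurjective

section RelativeToFirst

variable (𝕜 : Type*) [NontriviallyNormedField 𝕜] {E F : Type*} [NormedAddCommGroup E]
  [NormedSpace 𝕜 E] [NormedAddCommGroup F] [NormedSpace 𝕜 F]

variable (E) in
noncomputable def relativeToFirst (M : ℕ) : (Fin (M + 1) → E) →L[𝕜] (Fin M → E) :=
  .pi fun i => .proj (R := 𝕜) (φ := fun _ => E) i.succ - .proj 0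

@[simp]
theorem relativeToFirst_apply {M : ℕ} (X : Fin (M + 1) → E) (i : Fin M) :
    relativeToFirst 𝕜 E M X i = X i.succ - X 0 :=
  rfl

theorem relativeToFirst_surjective (M : ℕ) : Surjective (relativeToFirst 𝕜 E M) := fun Z =>
  ⟨Fin.cons 0 Z, by ext1 i; simp⟩

theorem relativeToFirst_map {M : ℕ} (A : E →+ F) (X : Fin (M + 1) → E) :
    relativeToFirst 𝕜 F M (fun i => A (X i)) = fun i => A (relativeToFirst 𝕜 E M X i) := by
  ext1 i; simp

end RelativeToFirst

theorem stmt_8_general (n M : ℕ)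
    (l : Matrix (Fin n) (Fin n) ℝ)
    (g : (Fin M → Fin n → ℝ) → (Fin n → ℝ))
    (hg : Differentiable ℝ g)
    (f : (Fin (M + 1) → Fin n → ℝ) → (Fin n → ℝ))
    (hf : ∀ X : Fin (M + 1) → Fin n → ℝ, f X = g (fun i : Fin M => X i.succ - X 0)) :
    (∀ X : Fin (M + 1) → Fin n → ℝ,
        fderiv ℝ f X (fun i => l.mulVec (X i)) = l.mulVec (f X)) ↔
      (∀ Z : Fin M → Fin n → ℝ,
        fderiv ℝ g Z (fun i => l.mulVec (Z i)) = l.mulVec (g Z)) := by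
  obtain rfl : f = g ∘ relativeToFirst ℝ (Fin n → ℝ) M := funext fun X => (hf X).trans rfl
  exact forall_fderiv_comp_clm_apply_iff _ (relativeToFirst_surjective ℝ M) hg l.mulVec
    (relativeToFirst_map ℝ l.mulVecLin.toAddMonoidHom)

/-- Let `N = M + 1 ≥ 2` agents, `l ∈ M_n(ℝ)`, `g` differentiable on
`(ℝ^n)^(N−1)` and `f(X_1,…,X_N) := g(X_2 − X_1, …, X_N − X_1)`. Then `f` satisfies
the joint equivariance equation for `l` if and only if `g` does:
`Dg(Z)(l·Z_2,…,l·Z_N) = l·g(Z)` for all `Z`. -/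
theorem stmt_8 (n M : ℕ) (hM : 1 ≤ M)
    (l : Matrix (Fin n) (Fin n) ℝ)
    (g : (Fin M → Fin n → ℝ) → (Fin n → ℝ))
    (hg : Differentiable ℝ g)
    (f : (Fin (M + 1) → Fin n → ℝ) → (Fin n → ℝ))
    (hf : ∀ X : Fin (M + 1) → Fin n → ℝ, f X = g (fun i : Fin M => X i.succ - X 0)) :
    (∀ X : Fin (M + 1) → Fin n → ℝ,
        fderiv ℝ f X (fun i => l.mulVec (X i)) = l.mulVec (f X)) ↔
      (∀ Z : Fin M → Fin n → ℝ,
        fderiv ℝ g Z (fun i => l.mulVec (Z i)) = l.mulVec (g Z)) :=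
  stmt_8_general n M l g hg f hf
end

section
/- Let N ≥ 2, let J be the 2×2 matrix with rows (0, −1) and (1, 0), and let U = {(X_1,…,X_N) ∈ (ℝ²)^N : X_1 ≠ X_2}. Let F_1, …, F_N : U → ℝ² be differentiable maps such that for each i: (a) F_i(X_1 + b, …, X_N + b) = F_i(X_1,…,X_N) for every b ∈ ℝ² and every X with both points in U, and (b) DF_i(X)(J·X_1, …, J·X_N) = J·F_i(X) for every X ∈ U. Then there exist differentiable functions λ_i, μ_i : U → ℝ (i = 1,…,N) such that F_i(X) = λ_i(X)·(X_2 − X_1) + μ_i(X)·J(X_2 − X_1) for every X ∈ U, and each λ_i and μ_i is invariant under simultaneous translations (λ_i(X_1+b,…,X_N+b) = λ_i(X) for all b) and has zero derivative at every X in the direction (J·X_1, …, J·X_N). -/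
/-!
For `X₁ ≠ X₂` the vectors `v = X₂ - X₁` and `J v` are orthogonal of the same nonzero length, so
`λᵢ = ⟪Fᵢ, v⟫ / ‖v‖²` and `μᵢ = ⟪Fᵢ, J v⟫ / ‖v‖²`; translation invariance of these is inherited
from `Fᵢ` and `v`. Along the generator `w = (J Xⱼ)ⱼ` each of `Fᵢ`, `v`, `J v` has derivative equal
to `J` applied to its value, and since `J` is skew-symmetric the derivative along `w` of a dot
product of two such maps vanishes, hence so does that of the quotients.
-/

open Matrix

section Derivatives

variable {E : Type*} [NormedAddCommGroup E] [NormedSpace ℝ E] {n : Type*} [Fintype n]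

theorem dotProduct_mulVec_add_mulVec_dotProduct {A : Matrix n n ℝ} (hA : Aᵀ = -A)
    (u v : n → ℝ) : A *ᵥ u ⬝ᵥ v + u ⬝ᵥ A *ᵥ v = 0 := by
  rw [dotProduct_mulVec, ← vecMul_transpose, hA, vecMul_neg, neg_dotProduct, neg_add_cancel]

theorem DifferentiableAt.dotProduct {f g : E → n → ℝ} {x : E} (hf : DifferentiableAt ℝ f x)
    (hg : DifferentiableAt ℝ g x) : DifferentiableAt ℝ (fun y => f y ⬝ᵥ g y) x :=
  DifferentiableAt.fun_sum fun k _ =>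
    (differentiableAt_pi.mp hf k).mul (differentiableAt_pi.mp hg k)

theorem fderiv_dotProduct_apply {f g : E → n → ℝ} {x : E} (hf : DifferentiableAt ℝ f x)
    (hg : DifferentiableAt ℝ g x) (w : E) :
    fderiv ℝ (fun y => f y ⬝ᵥ g y) x w = fderiv ℝ f x w ⬝ᵥ g x + f x ⬝ᵥ fderiv ℝ g x w := by
  have hfk := hasFDerivAt_pi'.mp hf.hasFDerivAt
  have hgk := hasFDerivAt_pi'.mp hg.hasFDerivAt
  have hdot : HasFDerivAt (fun y => f y ⬝ᵥ g y) _ x :=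
    HasFDerivAt.fun_sum fun k _ => (hfk k).mul (hgk k)
  rw [hdot.fderiv]
  simp [dotProduct, Finset.sum_add_distrib, mul_comm, add_comm]

theorem HasFDerivAt.mulVec {m : Type*} [Fintype m] (B : Matrix m n ℝ) {f : E → n → ℝ}
    {f' : E →L[ℝ] n → ℝ} {x : E} (hf : HasFDerivAt f f' x) :
    HasFDerivAt (fun y => B *ᵥ f y) ((LinearMap.toContinuousLinearMap B.mulVecLin).comp f') x :=
  (LinearMap.toContinuousLinearMap B.mulVecLin).hasFDerivAt.comp x hf

theorem DifferentiableAt.mulVec {m : Type*} [Fintype m] (B : Matrix m n ℝ) {f : E → n → ℝ}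
    {x : E} (hf : DifferentiableAt ℝ f x) : DifferentiableAt ℝ (fun y => B *ᵥ f y) x :=
  (hf.hasFDerivAt.mulVec B).differentiableAt

theorem fderiv_mulVec_apply {m : Type*} [Fintype m] (B : Matrix m n ℝ) {f : E → n → ℝ} {x : E}
    (hf : DifferentiableAt ℝ f x) (w : E) :
    fderiv ℝ (fun y => B *ᵥ f y) x w = B *ᵥ fderiv ℝ f x w := by
  rw [(hf.hasFDerivAt.mulVec B).fderiv]
  rfl

variable {A : Matrix n n ℝ} {f g v : E → n → ℝ} {x w : E}

theorem fderiv_dotProduct_apply_eq_zero (hA : Aᵀ = -A) (hf : DifferentiableAt ℝ f x)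
    (hg : DifferentiableAt ℝ g x) (hfw : fderiv ℝ f x w = A *ᵥ f x)
    (hgw : fderiv ℝ g x w = A *ᵥ g x) : fderiv ℝ (fun y => f y ⬝ᵥ g y) x w = 0 := by
  rw [fderiv_dotProduct_apply hf hg, hfw, hgw, dotProduct_mulVec_add_mulVec_dotProduct hA]

theorem DifferentiableAt.dotProduct_div_dotProduct_self (hf : DifferentiableAt ℝ f x)
    (hg : DifferentiableAt ℝ g x) (hv : DifferentiableAt ℝ v x) (hvx : v x ≠ 0) :
    DifferentiableAt ℝ (fun y => f y ⬝ᵥ g y / (v y ⬝ᵥ v y)) x :=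
  (hf.dotProduct hg).mul ((hv.dotProduct hv).inv (mt dotProduct_self_eq_zero.mp hvx))

theorem fderiv_dotProduct_div_dotProduct_self_apply_eq_zero (hA : Aᵀ = -A)
    (hf : DifferentiableAt ℝ f x) (hg : DifferentiableAt ℝ g x) (hv : DifferentiableAt ℝ v x)
    (hvx : v x ≠ 0) (hfw : fderiv ℝ f x w = A *ᵥ f x) (hgw : fderiv ℝ g x w = A *ᵥ g x)
    (hvw : fderiv ℝ v x w = A *ᵥ v x) :
    fderiv ℝ (fun y => f y ⬝ᵥ g y / (v y ⬝ᵥ v y)) x w = 0 := by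
  have hinv : HasFDerivAt (fun y => (v y ⬝ᵥ v y)⁻¹) _ x :=
    (hasDerivAt_inv (mt dotProduct_self_eq_zero.mp hvx)).comp_hasFDerivAt x
      (hv.dotProduct hv).hasFDerivAt
  have hquot : HasFDerivAt (fun y => f y ⬝ᵥ g y / (v y ⬝ᵥ v y)) _ x :=
    (hf.dotProduct hg).hasFDerivAt.mul hinv
  simp [hquot.fderiv, fderiv_dotProduct_apply_eq_zero hA hf hg hfw hgw,
    fderiv_dotProduct_apply_eq_zero hA hv hv hvw hvw]

theorem fderiv_eval_sub_eval_apply_mulVec {ι : Type*} [Fintype ι] (X : ι → n → ℝ) (j k : ι) :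
    fderiv ℝ (fun Y : ι → n → ℝ => Y k - Y j) X (fun l => A *ᵥ X l) = A *ᵥ (X k - X j) := by
  have hsub : HasFDerivAt (fun Y : ι → n → ℝ => Y k - Y j) _ X :=
    (hasFDerivAt_apply (𝕜 := ℝ) k X).sub (hasFDerivAt_apply j X)
  simp [hsub.fderiv, mulVec_sub]

end Derivatives

theorem eq_smul_add_smul_mulVec {J : Matrix (Fin 2) (Fin 2) ℝ} (hJ : J = !![0, -1; 1, 0])
    (u : Fin 2 → ℝ) {v : Fin 2 → ℝ} (hv : v ≠ 0) :
    u = (u ⬝ᵥ v / (v ⬝ᵥ v)) • v + (u ⬝ᵥ J *ᵥ v / (v ⬝ᵥ v)) • J *ᵥ v := by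
  have key : (v ⬝ᵥ v) • u = (u ⬝ᵥ v) • v + (u ⬝ᵥ J *ᵥ v) • J *ᵥ v := by
    subst hJ
    ext k
    fin_cases k <;> simp [dotProduct, Fin.sum_univ_two, mulVec] <;> ring
  rw [div_eq_inv_mul, div_eq_inv_mul, mul_smul, mul_smul, ← smul_add, ← key,
    inv_smul_smul₀ (mt dotProduct_self_eq_zero.mp hv)]

/-- Let `N = M + 2 ≥ 2` agents on the plane, `J = [[0,−1],[1,0]]`,
and `U = {X : X_1 ≠ X_2}`. If each `F_i` is differentiable on `U`, invariant under
simultaneous translations and jointly equivariant for the rotation generator `J`,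
then `F_i(X) = λ_i(X)•(X_2 − X_1) + μ_i(X)•J(X_2 − X_1)` with differentiable
coefficients `λ_i, μ_i` that are translation invariant and jointly radial for `J`. -/
theorem stmt_10 (M : ℕ)
    (J : Matrix (Fin 2) (Fin 2) ℝ) (hJ : J = Matrix.of ![![0, -1], ![1, 0]])
    (U : Set (Fin (M + 2) → Fin 2 → ℝ))
    (hU : U = {X | X 0 ≠ X 1})
    (F : Fin (M + 2) → (Fin (M + 2) → Fin 2 → ℝ) → (Fin 2 → ℝ))
    (hF_diff : ∀ i, ∀ X ∈ U, DifferentiableAt ℝ (F i) X)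
    (hF_trans : ∀ i, ∀ X ∈ U, ∀ b : Fin 2 → ℝ, F i (fun j => X j + b) = F i X)
    (hF_rot : ∀ i, ∀ X ∈ U,
      fderiv ℝ (F i) X (fun j => J.mulVec (X j)) = J.mulVec (F i X)) :
    ∃ lam mu : Fin (M + 2) → (Fin (M + 2) → Fin 2 → ℝ) → ℝ,
      (∀ i, ∀ X ∈ U, DifferentiableAt ℝ (lam i) X ∧ DifferentiableAt ℝ (mu i) X) ∧
      (∀ i, ∀ X ∈ U,
        F i X = lam i X • (X 1 - X 0) + mu i X • J.mulVec (X 1 - X 0)) ∧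
      (∀ i, ∀ X ∈ U, ∀ b : Fin 2 → ℝ,
        lam i (fun j => X j + b) = lam i X ∧ mu i (fun j => X j + b) = mu i X) ∧
      (∀ i, ∀ X ∈ U,
        fderiv ℝ (lam i) X (fun j => J.mulVec (X j)) = 0 ∧
        fderiv ℝ (mu i) X (fun j => J.mulVec (X j)) = 0) := by
  subst hU
  have hJ_skew : Jᵀ = -J := by
    subst hJ
    ext i j
    fin_cases i <;> fin_cases j <;> simp
  set v : (Fin (M + 2) → Fin 2 → ℝ) → Fin 2 → ℝ := fun X => X 1 - X 0 with hv
  have hv_diff : ∀ X, DifferentiableAt ℝ v X := by fun_prop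
  have hv_rot : ∀ X, fderiv ℝ v X (fun j => J *ᵥ X j) = J *ᵥ v X := fun X =>
    fderiv_eval_sub_eval_apply_mulVec X 0 1
  have hJv_rot : ∀ X, fderiv ℝ (fun Y => J *ᵥ v Y) X (fun j => J *ᵥ X j) = J *ᵥ (J *ᵥ v X) :=
    fun X => by rw [fderiv_mulVec_apply J (hv_diff X), hv_rot]
  have hv_ne : ∀ X : Fin (M + 2) → Fin 2 → ℝ, X 0 ≠ X 1 → v X ≠ 0 := fun X hX =>
    sub_ne_zero.mpr hX.symm
  refine ⟨fun i X => F i X ⬝ᵥ v X / (v X ⬝ᵥ v X), fun i X => F i X ⬝ᵥ J *ᵥ v X / (v X ⬝ᵥ v X),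
    fun i X hX => ⟨?_, ?_⟩, fun i X hX => eq_smul_add_smul_mulVec hJ _ (hv_ne X hX),
    fun i X hX b => by simp [hv, hF_trans i X hX b], fun i X hX => ⟨?_, ?_⟩⟩
  · exact (hF_diff i X hX).dotProduct_div_dotProduct_self (hv_diff X) (hv_diff X) (hv_ne X hX)
  · exact (hF_diff i X hX).dotProduct_div_dotProduct_self ((hv_diff X).mulVec J) (hv_diff X)
      (hv_ne X hX)
  · exact fderiv_dotProduct_div_dotProduct_self_apply_eq_zero hJ_skew (hF_diff i X hX)
      (hv_diff X) (hv_diff X) (hv_ne X hX) (hF_rot i X hX) (hv_rot X) (hv_rot X)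
  · exact fderiv_dotProduct_div_dotProduct_self_apply_eq_zero hJ_skew (hF_diff i X hX)
      ((hv_diff X).mulVec J) (hv_diff X) (hv_ne X hX) (hF_rot i X hX) (hJv_rot X) (hv_rot X)
end

section
/- Let J be the 2×2 matrix with rows (0, −1) and (1, 0), and let U = {(X_1, X_2) ∈ ℝ² × ℝ² : X_1 ≠ X_2}. Define V : U → ℝ² × ℝ² by V(X_1, X_2) = ( −J(X_2 − X_1)/‖X_2 − X_1‖² , J(X_2 − X_1)/‖X_2 − X_1‖² ), where ‖·‖ is the Euclidean norm. Then there exists no differentiable function φ : U → ℝ such that for every (X_1,X_2) ∈ U and every (v_1,v_2) ∈ ℝ²×ℝ², the derivative of φ at (X_1,X_2) evaluated at (v_1,v_2) equals ⟨V(X_1,X_2), (v_1,v_2)⟩, the standard inner product on ℝ²×ℝ² ≅ ℝ⁴. -/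
/-!
Pairing with `V` is the 1-form `dθ`, where `θ` is the polar angle of `X₂ - X₁`. Along the loop
on which `X₂` runs once around the unit circle centred at `X₁ = 0`, a primitive `φ` would
therefore increase at unit speed, so it could not return to its starting value after time `2π`.
-/

open Real

theorem eq_zero_of_forall_hasDerivAt_const_of_apply_eq {f : ℝ → ℝ} {c a b : ℝ}
    (hf : ∀ t, HasDerivAt f c t) (hab : a ≠ b) (hfab : f a = f b) : c = 0 := by
  have h := intervalIntegral.integral_eq_sub_of_hasDerivAt (fun t _ => hf t)
    (intervalIntegrable_const (c := c) (μ := MeasureTheory.volume) (a := a) (b := b))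
  rw [intervalIntegral.integral_const, hfab, sub_self, smul_eq_mul] at h
  exact (mul_eq_zero.mp h).resolve_left (sub_ne_zero.mpr hab.symm)

noncomputable def circleLoop (t : ℝ) : (Fin 2 → ℝ) × (Fin 2 → ℝ) := (0, ![cos t, sin t])

theorem circleLoop_fst_ne_snd (t : ℝ) : (circleLoop t).1 ≠ (circleLoop t).2 := by
  intro h
  have h0 : cos t = 0 := by simpa [circleLoop] using (congrFun h 0).symm
  have h1 : sin t = 0 := by simpa [circleLoop] using (congrFun h 1).symm
  simpa [h0, h1] using sin_sq_add_cos_sq t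

theorem hasDerivAt_circleLoop (t : ℝ) :
    HasDerivAt circleLoop (0, ![-sin t, cos t]) t := by
  refine (hasDerivAt_const t _).prodMk (hasDerivAt_pi.mpr fun i => ?_)
  fin_cases i
  · simpa using hasDerivAt_cos t
  · simpa using hasDerivAt_sin t

theorem circleLoop_two_pi : circleLoop (2 * π) = circleLoop 0 := by
  simp [circleLoop]

noncomputable def vortexField (p : (Fin 2 → ℝ) × (Fin 2 → ℝ)) : (Fin 2 → ℝ) × (Fin 2 → ℝ) :=
  ((-(∑ j, (p.2 j - p.1 j) ^ 2)⁻¹) • (Matrix.of ![![0, -1], ![1, 0]]).mulVec (p.2 - p.1),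
    (∑ j, (p.2 j - p.1 j) ^ 2)⁻¹ • (Matrix.of ![![0, -1], ![1, 0]]).mulVec (p.2 - p.1))

theorem vortexField_circleLoop_pairing (t : ℝ) :
    let v : (Fin 2 → ℝ) × (Fin 2 → ℝ) := (0, ![-sin t, cos t])
    (∑ j, (vortexField (circleLoop t)).1 j * v.1 j) +
      ∑ j, (vortexField (circleLoop t)).2 j * v.2 j = 1 := by
  simp [vortexField, circleLoop, Fin.sum_univ_two]
  nlinarith [sin_sq_add_cos_sq t]

/-- Let `J = [[0,−1],[1,0]]`, `U = {(X_1,X_2) : X_1 ≠ X_2}` and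
`V(X_1,X_2) = (−J(X_2−X_1)/‖X_2−X_1‖², J(X_2−X_1)/‖X_2−X_1‖²)`. There is no
differentiable `φ : U → ℝ` whose derivative at each point of `U` is the inner
product with `V`, i.e. `V` is not a gradient on `U`. -/
theorem stmt_11
    (J : Matrix (Fin 2) (Fin 2) ℝ) (hJ : J = Matrix.of ![![0, -1], ![1, 0]])
    (U : Set ((Fin 2 → ℝ) × (Fin 2 → ℝ)))
    (hU : U = {p | p.1 ≠ p.2})
    (V : (Fin 2 → ℝ) × (Fin 2 → ℝ) → (Fin 2 → ℝ) × (Fin 2 → ℝ))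
    (hV : ∀ p : (Fin 2 → ℝ) × (Fin 2 → ℝ),
      V p = ((-(∑ j, (p.2 j - p.1 j) ^ 2)⁻¹) • J.mulVec (p.2 - p.1),
             (∑ j, (p.2 j - p.1 j) ^ 2)⁻¹ • J.mulVec (p.2 - p.1))) :
    ¬ ∃ φ : (Fin 2 → ℝ) × (Fin 2 → ℝ) → ℝ,
        (∀ p ∈ U, DifferentiableAt ℝ φ p) ∧
        (∀ p ∈ U, ∀ v : (Fin 2 → ℝ) × (Fin 2 → ℝ),
          fderiv ℝ φ p v = (∑ j, (V p).1 j * v.1 j) + (∑ j, (V p).2 j * v.2 j)) := by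
  rintro ⟨φ, hdiff, hgrad⟩
  obtain rfl : V = vortexField := funext fun p => by rw [hV, hJ]; rfl
  subst hU
  have hloop : ∀ t, HasDerivAt (φ ∘ circleLoop) 1 t := fun t => by
    have h := (hdiff _ (circleLoop_fst_ne_snd t)).hasFDerivAt.comp_hasDerivAt t
      (hasDerivAt_circleLoop t)
    rwa [hgrad _ (circleLoop_fst_ne_snd t), vortexField_circleLoop_pairing] at h
  exact one_ne_zero <| eq_zero_of_forall_hasDerivAt_const_of_apply_eq hloop
    (mul_ne_zero two_ne_zero pi_ne_zero).symm (congrArg φ circleLoop_two_pi.symm)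
end

section
/- Fix c > 0 and let K be the 2×2 matrix with rows (0, c⁻¹) and (c, 0). Let U = {(T, x) ∈ ℝ² : c²T² ≠ x²} and let f : U → ℝ² be continuously differentiable with Df(Z)(K·Z) = K·f(Z) for every Z ∈ U. Then there exist differentiable functions φ, ψ : U → ℝ such that f(Z) = φ(Z)·Z + ψ(Z)·K·Z for every Z ∈ U, and Dφ(Z)(K·Z) = 0 and Dψ(Z)(K·Z) = 0 for every Z ∈ U. -/
/-!
The Minkowski form `B(Z, W) = c² Z₀ W₀ − Z₁ W₁` is infinitesimally invariant under `K`: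
`B(KZ, W) + B(Z, KW) = 0`. Hence `B(Z, KZ) = 0` and `B(KZ, KZ) = −B(Z, Z)`, so off the light cone
`Z` and `KZ` form a `B`-orthogonal basis and `f = φ Z + ψ KZ` with `φ = B(f, Z) / B(Z, Z)` and
`ψ = B(f, KZ) / B(KZ, KZ)`. Differentiating along `KZ`, the Leibniz rule and the equivariance
`Df(Z)(KZ) = K f(Z)` turn the derivative of every numerator and denominator into an instance of
`B(Ku, w) + B(u, Kw) = 0`, so both quotients are constant along the flow of `K`.
-/

open Matrix

section ProjCoeff

variable {𝕜 E : Type*} [NontriviallyNormedField 𝕜] [NormedAddCommGroup E] [NormedSpace 𝕜 E]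

theorem fderiv_div_apply_eq_zero {n d : E → 𝕜} {x v : E} (hn : DifferentiableAt 𝕜 n x)
    (hd : DifferentiableAt 𝕜 d x) (hdx : d x ≠ 0) (hnv : fderiv 𝕜 n x v = 0)
    (hdv : fderiv 𝕜 d x v = 0) : fderiv 𝕜 (fun y => n y / d y) x v = 0 := by
  have hinv : fderiv 𝕜 (fun y => (d y)⁻¹) x v = 0 := by
    rw [fderiv_fun_comp x (differentiableAt_inv hdx) hd, ContinuousLinearMap.comp_apply, hdv,
      map_zero]
  simp_rw [div_eq_mul_inv]
  rw [fderiv_fun_mul hn (hd.fun_inv hdx)]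
  simp [hnv, hinv]

theorem fderiv_bilin_apply_eq_zero_of_skew (B : E →L[𝕜] E →L[𝕜] 𝕜) {A : E →L[𝕜] E}
    (hA : ∀ u w, B (A u) w + B u (A w) = 0) {f g : E → E} {x : E}
    (hf : DifferentiableAt 𝕜 f x) (hg : DifferentiableAt 𝕜 g x)
    (hfA : fderiv 𝕜 f x (A x) = A (f x)) (hgA : fderiv 𝕜 g x (A x) = A (g x)) :
    fderiv 𝕜 (fun y => B (f y) (g y)) x (A x) = 0 := by
  rw [B.fderiv_of_bilinear hf hg]
  simpa [hfA, hgA, add_comm] using hA (f x) (g x)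

/-- The coefficient of `f y` along `g y` in a `B`-orthogonal decomposition. -/
def projCoeff (B : E →L[𝕜] E →L[𝕜] 𝕜) (g f : E → E) (y : E) : 𝕜 :=
  B (f y) (g y) / B (g y) (g y)

variable {B : E →L[𝕜] E →L[𝕜] 𝕜} {f g : E → E} {x : E}

theorem differentiableAt_projCoeff (hf : DifferentiableAt 𝕜 f x) (hg : DifferentiableAt 𝕜 g x)
    (hgx : B (g x) (g x) ≠ 0) : DifferentiableAt 𝕜 (projCoeff B g f) x := by
  unfold projCoeff
  fun_prop (disch := exact hgx)

theorem fderiv_projCoeff_apply_eq_zero {A : E →L[𝕜] E} (hA : ∀ u w, B (A u) w + B u (A w) = 0)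
    (hf : DifferentiableAt 𝕜 f x) (hg : DifferentiableAt 𝕜 g x)
    (hfA : fderiv 𝕜 f x (A x) = A (f x)) (hgA : fderiv 𝕜 g x (A x) = A (g x))
    (hgx : B (g x) (g x) ≠ 0) : fderiv 𝕜 (projCoeff B g f) x (A x) = 0 :=
  fderiv_div_apply_eq_zero (by fun_prop) (by fun_prop) hgx
    (fderiv_bilin_apply_eq_zero_of_skew B hA hf hg hfA hgA)
    (fderiv_bilin_apply_eq_zero_of_skew B hA hg hg hgA hgA)

end ProjCoeff

noncomputable def minkowskiForm (c : ℝ) : (Fin 2 → ℝ) →L[ℝ] (Fin 2 → ℝ) →L[ℝ] ℝ :=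
  c ^ 2 • (ContinuousLinearMap.mul ℝ ℝ).bilinearComp (.proj 0) (.proj 0) -
    (ContinuousLinearMap.mul ℝ ℝ).bilinearComp (.proj 1) (.proj 1)

@[simp]
theorem minkowskiForm_apply (c : ℝ) (Z W : Fin 2 → ℝ) :
    minkowskiForm c Z W = c ^ 2 * (Z 0 * W 0) - Z 1 * W 1 := by
  simp [minkowskiForm]

theorem minkowskiForm_self (c : ℝ) (Z : Fin 2 → ℝ) :
    minkowskiForm c Z Z = c ^ 2 * Z 0 ^ 2 - Z 1 ^ 2 := by
  rw [minkowskiForm_apply]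
  ring

noncomputable def boostGenerator (c : ℝ) : Matrix (Fin 2) (Fin 2) ℝ :=
  Matrix.of ![![0, c⁻¹], ![c, 0]]

theorem boostGenerator_mulVec (c : ℝ) (Z : Fin 2 → ℝ) :
    boostGenerator c *ᵥ Z = ![c⁻¹ * Z 1, c * Z 0] := by
  ext i
  fin_cases i <;> simp [boostGenerator, Matrix.mulVec, dotProduct, Fin.sum_univ_two]

theorem minkowskiForm_boostGenerator_add (c : ℝ) (Z W : Fin 2 → ℝ) :
    minkowskiForm c (boostGenerator c *ᵥ Z) W + minkowskiForm c Z (boostGenerator c *ᵥ W) = 0 := by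
  simp only [minkowskiForm_apply, boostGenerator_mulVec, cons_val_zero, cons_val_one]
  field_simp
  ring

theorem minkowskiForm_boostGenerator_self {c : ℝ} (hc : c ≠ 0) (Z : Fin 2 → ℝ) :
    minkowskiForm c (boostGenerator c *ᵥ Z) (boostGenerator c *ᵥ Z) = -minkowskiForm c Z Z := by
  simp only [minkowskiForm_apply, boostGenerator_mulVec, cons_val_zero, cons_val_one]
  field_simp
  ring

theorem eq_projCoeff_smul_add_projCoeff_smul {c : ℝ} (hc : c ≠ 0) (f : (Fin 2 → ℝ) → Fin 2 → ℝ)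
    {Z : Fin 2 → ℝ} (hZ : minkowskiForm c Z Z ≠ 0) :
    f Z = projCoeff (minkowskiForm c) id f Z • Z +
      projCoeff (minkowskiForm c) (boostGenerator c *ᵥ ·) f Z • (boostGenerator c *ᵥ Z) := by
  rw [projCoeff, projCoeff, id, minkowskiForm_boostGenerator_self hc, div_neg,
    boostGenerator_mulVec]
  rw [minkowskiForm_self] at hZ
  ext i
  fin_cases i <;> simp <;> field_simp <;> ring

/-- Fix `c > 0` and `K = [[0, c⁻¹],[c, 0]]` (generator of
`so(1,1)`). On `U = {(T,x) : c²T² ≠ x²}`, every continuously differentiable `f`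
with `Df(Z)(K·Z) = K·f(Z)` decomposes as `f(Z) = φ(Z)•Z + ψ(Z)•K·Z` with
differentiable coefficients `φ, ψ` that are radial: `Dφ(Z)(K·Z) = Dψ(Z)(K·Z) = 0`
on `U`. -/
theorem stmt_13 (c : ℝ) (hc : 0 < c)
    (K : Matrix (Fin 2) (Fin 2) ℝ) (hK : K = Matrix.of ![![0, c⁻¹], ![c, 0]])
    (U : Set (Fin 2 → ℝ))
    (hU : U = {Z | c ^ 2 * (Z 0) ^ 2 ≠ (Z 1) ^ 2})
    (f : (Fin 2 → ℝ) → (Fin 2 → ℝ))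
    (hf : ContDiffOn ℝ 1 f U)
    (hequiv : ∀ Z ∈ U, fderiv ℝ f Z (K.mulVec Z) = K.mulVec (f Z)) :
    ∃ φ ψ : (Fin 2 → ℝ) → ℝ,
      (∀ Z ∈ U, DifferentiableAt ℝ φ Z ∧ DifferentiableAt ℝ ψ Z) ∧
      (∀ Z ∈ U, f Z = φ Z • Z + ψ Z • K.mulVec Z) ∧
      (∀ Z ∈ U, fderiv ℝ φ Z (K.mulVec Z) = 0 ∧ fderiv ℝ ψ Z (K.mulVec Z) = 0) := by
  obtain rfl : K = boostGenerator c := hK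
  set A : (Fin 2 → ℝ) →L[ℝ] (Fin 2 → ℝ) := (boostGenerator c).mulVecLin.toContinuousLinearMap
  have hQ : ∀ Z ∈ U, minkowskiForm c Z Z ≠ 0 := fun Z hZ => by
    rw [hU] at hZ
    rw [minkowskiForm_self]
    exact sub_ne_zero.mpr hZ
  have hQA : ∀ Z ∈ U, minkowskiForm c (A Z) (A Z) ≠ 0 := fun Z hZ => by
    rw [show A Z = boostGenerator c *ᵥ Z from rfl, minkowskiForm_boostGenerator_self hc.ne']
    exact neg_ne_zero.mpr (hQ Z hZ)
  have hfd : ∀ Z ∈ U, DifferentiableAt ℝ f Z := fun Z hZ =>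
    (hf.differentiableOn one_ne_zero).differentiableAt
      ((hU ▸ isOpen_ne_fun (by fun_prop) (by fun_prop) : IsOpen U).mem_nhds hZ)
  have hid : ∀ Z, fderiv ℝ id Z (A Z) = A (id Z) := fun Z => by rw [fderiv_id]; rfl
  have hAA : ∀ Z, fderiv ℝ A Z (A Z) = A (A Z) := fun Z => by rw [A.fderiv]
  have hskew := minkowskiForm_boostGenerator_add c
  refine ⟨projCoeff (minkowskiForm c) id f, projCoeff (minkowskiForm c) A f,
    fun Z hZ => ⟨?_, ?_⟩, fun Z hZ => eq_projCoeff_smul_add_projCoeff_smul hc.ne' f (hQ Z hZ),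
    fun Z hZ => ⟨?_, ?_⟩⟩
  · exact differentiableAt_projCoeff (hfd Z hZ) differentiableAt_id (hQ Z hZ)
  · exact differentiableAt_projCoeff (hfd Z hZ) A.differentiableAt (hQA Z hZ)
  · exact fderiv_projCoeff_apply_eq_zero hskew (hfd Z hZ) differentiableAt_id (hequiv Z hZ)
      (hid Z) (hQ Z hZ)
  · exact fderiv_projCoeff_apply_eq_zero hskew (hfd Z hZ) A.differentiableAt (hequiv Z hZ)
      (hAA Z) (hQA Z hZ)
end

section
/- Let η be the 3×3 diagonal matrix diag(1, −1, −1), and let so(1,2) = {l ∈ M₃(ℝ) : lᵀ·η + η·l = 0}. Let U = {(T, x, y) ∈ ℝ³ : (x, y) ≠ (0, 0)} and let f : U → ℝ³ be continuously differentiable such that Df(Z)(l·Z) = l·f(Z) for every Z ∈ U and every l ∈ so(1,2). Then there exists a differentiable function ψ : U → ℝ such that f(Z) = ψ(Z)·Z for every Z ∈ U, and Dψ(Z)(l·Z) = 0 for every Z ∈ U and every l ∈ so(1,2). -/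
/-!
For `Z = (T, x, y)` the matrix `l = so12Stabilizer Z ∈ so(1,2)` acts by `W ↦ η (Z × W)`, so it
annihilates `Z` and, as `Z ≠ 0`, its kernel is the line `ℝ · Z`. The equivariance identity at
this `l` gives `l · f(Z) = Df(Z)(l · Z) = 0`, hence `f(Z) = ψ(Z) • Z`; on `U` the coefficient is
the differentiable expression `ψ(Z) = (x f₁(Z) + y f₂(Z)) / (x² + y²)`. Differentiating
`f = ψ • id` gives `Df(Z)(l · Z) = Dψ(Z)(l · Z) • Z + ψ(Z) • l · Z` for every `l`, and comparing
with `l · f(Z) = ψ(Z) • l · Z` leaves `Dψ(Z)(l · Z) • Z = 0`.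
-/

open Filter Topology
open scoped Matrix

theorem fderiv_apply_eq_zero_of_eventuallyEq_smul_self {𝕜 E : Type*}
    [NontriviallyNormedField 𝕜] [NormedAddCommGroup E] [NormedSpace 𝕜 E]
    {f : E → E} {ψ : E → 𝕜} {Z : E} {A : E →ₗ[𝕜] E}
    (hψ : DifferentiableAt 𝕜 ψ Z) (hf : f =ᶠ[𝓝 Z] fun Y => ψ Y • Y) (hZ : Z ≠ 0)
    (hA : fderiv 𝕜 f Z (A Z) = A (f Z)) :
    fderiv 𝕜 ψ Z (A Z) = 0 := by
  have hderiv :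
      fderiv 𝕜 f Z = ψ Z • ContinuousLinearMap.id 𝕜 E + (fderiv 𝕜 ψ Z).smulRight Z :=
    hf.fderiv_eq.trans (hψ.hasFDerivAt.smul (hasFDerivAt_id Z)).fderiv
  rw [hderiv, hf.eq_of_nhds, map_smul] at hA
  simp only [add_apply, smul_apply, ContinuousLinearMap.id_apply,
    ContinuousLinearMap.smulRight_apply, add_eq_left] at hA
  exact (smul_eq_zero.mp hA).resolve_right hZ

def so12Stabilizer (Z : Fin 3 → ℝ) : Matrix (Fin 3) (Fin 3) ℝ :=
  !![0, -Z 2, Z 1; -Z 2, 0, Z 0; Z 1, -Z 0, 0]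

theorem so12Stabilizer_mem (Z : Fin 3 → ℝ) :
    (so12Stabilizer Z)ᵀ * Matrix.diagonal ![1, -1, -1] +
      Matrix.diagonal ![1, -1, -1] * so12Stabilizer Z = 0 := by
  ext i j
  fin_cases i <;> fin_cases j <;>
    simp [so12Stabilizer, Matrix.mul_apply, Matrix.diagonal]

theorem so12Stabilizer_mulVec_self (Z : Fin 3 → ℝ) : so12Stabilizer Z *ᵥ Z = 0 := by
  ext i
  fin_cases i <;> simp [so12Stabilizer, Matrix.mulVec, dotProduct, Fin.sum_univ_three] <;> ring

noncomputable def spatialCoeff (Z W : Fin 3 → ℝ) : ℝ :=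
  (Z 1 * W 1 + Z 2 * W 2) / (Z 1 ^ 2 + Z 2 ^ 2)

theorem eq_spatialCoeff_smul_of_so12Stabilizer_mulVec_eq_zero {Z W : Fin 3 → ℝ}
    (hZ : Z 1 ^ 2 + Z 2 ^ 2 ≠ 0) (hW : so12Stabilizer Z *ᵥ W = 0) :
    W = spatialCoeff Z W • Z := by
  have e0 := congrFun hW 0
  have e1 := congrFun hW 1
  have e2 := congrFun hW 2
  simp [so12Stabilizer, Matrix.mulVec, dotProduct, Fin.sum_univ_three] at e0 e1 e2
  ext i
  rw [Pi.smul_apply, smul_eq_mul, spatialCoeff, div_mul_eq_mul_div, eq_div_iff hZ]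
  fin_cases i <;> simp only [Fin.zero_eta, Fin.mk_one, Fin.reduceFinMk]
  · linear_combination Z 1 * e2 - Z 2 * e1
  · linear_combination -Z 2 * e0
  · linear_combination Z 1 * e0

theorem differentiableAt_spatialCoeff {f : (Fin 3 → ℝ) → Fin 3 → ℝ} {Z : Fin 3 → ℝ}
    (hf : DifferentiableAt ℝ f Z) (hZ : Z 1 ^ 2 + Z 2 ^ 2 ≠ 0) :
    DifferentiableAt ℝ (fun Y => spatialCoeff Y (f Y)) Z := by
  have hf_coord (i : Fin 3) : DifferentiableAt ℝ (fun Y => f Y i) Z :=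
    differentiableAt_pi.mp hf i
  unfold spatialCoeff
  fun_prop (disch := exact hZ)

/-- Let `η = diag(1,−1,−1)` and
`so(1,2) = {l : lᵀη + ηl = 0}`. On `U = {(T,x,y) : (x,y) ≠ (0,0)}`, every
continuously differentiable `f : U → ℝ³` with `Df(Z)(l·Z) = l·f(Z)` for all
`l ∈ so(1,2)` is of the form `f(Z) = ψ(Z)•Z` with a differentiable radial
coefficient `ψ`: `Dψ(Z)(l·Z) = 0` on `U` for all `l ∈ so(1,2)`. -/
theorem stmt_14
    (η : Matrix (Fin 3) (Fin 3) ℝ) (hη : η = Matrix.diagonal ![1, -1, -1])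
    (so12 : Set (Matrix (Fin 3) (Fin 3) ℝ))
    (hso12 : so12 = {l | l.transpose * η + η * l = 0})
    (U : Set (Fin 3 → ℝ))
    (hU : U = {Z | ¬(Z 1 = 0 ∧ Z 2 = 0)})
    (f : (Fin 3 → ℝ) → (Fin 3 → ℝ))
    (hf : ContDiffOn ℝ 1 f U)
    (hequiv : ∀ Z ∈ U, ∀ l ∈ so12, fderiv ℝ f Z (l.mulVec Z) = l.mulVec (f Z)) :
    ∃ ψ : (Fin 3 → ℝ) → ℝ,
      (∀ Z ∈ U, DifferentiableAt ℝ ψ Z) ∧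
      (∀ Z ∈ U, f Z = ψ Z • Z) ∧
      (∀ Z ∈ U, ∀ l ∈ so12, fderiv ℝ ψ Z (l.mulVec Z) = 0) := by
  subst hη hso12
  have hU_open : IsOpen U :=
    hU ▸ ((isClosed_eq (continuous_apply 1) continuous_const).inter
      (isClosed_eq (continuous_apply 2) continuous_const)).isOpen_compl
  have hden {Z} (hZ : Z ∈ U) : Z 1 ^ 2 + Z 2 ^ 2 ≠ 0 := by
    rw [hU] at hZ
    simpa [sq] using mt mul_self_add_mul_self_eq_zero.mp hZ
  have hfd {Z} (hZ : Z ∈ U) : DifferentiableAt ℝ f Z :=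
    (hf.differentiableOn one_ne_zero).differentiableAt (hU_open.mem_nhds hZ)
  have hradial : ∀ Z ∈ U, f Z = spatialCoeff Z (f Z) • Z := fun Z hZ =>
    eq_spatialCoeff_smul_of_so12Stabilizer_mulVec_eq_zero (hden hZ) <| by
      rw [← hequiv Z hZ _ (so12Stabilizer_mem Z), so12Stabilizer_mulVec_self, map_zero]
  refine ⟨fun Z => spatialCoeff Z (f Z),
    fun Z hZ => differentiableAt_spatialCoeff (hfd hZ) (hden hZ), hradial, fun Z hZ l hl => ?_⟩
  have hZ_ne : Z ≠ 0 := fun h => hden hZ (by simp [h])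
  exact fderiv_apply_eq_zero_of_eventuallyEq_smul_self (A := l.mulVecLin)
    (differentiableAt_spatialCoeff (hfd hZ) (hden hZ))
    (eventuallyEq_of_mem (hU_open.mem_nhds hZ) hradial) hZ_ne (hequiv Z hZ l hl)
end

section
/- Let v : ℝ³ → ℝ³ be a function such that: (a) ⟨v(x), x⟩ = 0 for every x ∈ ℝ³ with ‖x‖ = 1, and (b) v(g·x) = g·v(x) for every x ∈ ℝ³ with ‖x‖ = 1 and every 3×3 real matrix g with gᵀ·g = 1 and det g = 1. Then v(x) = 0 for every x ∈ ℝ³ with ‖x‖ = 1. -/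
/-- Let `v : ℝ³ → ℝ³` be tangent to the unit sphere
(`⟨v(x), x⟩ = 0` whenever `‖x‖ = 1`, in Euclidean terms `Σ x_j² = 1`) and
equivariant under `SO(3,ℝ)` (`v(g·x) = g·v(x)` for every `g` with `gᵀg = 1` and
`det g = 1`). Then `v` vanishes on the unit sphere. -/
theorem stmt_15 (v : (Fin 3 → ℝ) → (Fin 3 → ℝ))
    (htang : ∀ x : Fin 3 → ℝ, (∑ j, (x j) ^ 2) = 1 → (∑ j, v x j * x j) = 0)
    (hequiv : ∀ x : Fin 3 → ℝ, (∑ j, (x j) ^ 2) = 1 →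
      ∀ g : Matrix (Fin 3) (Fin 3) ℝ, g.transpose * g = 1 → g.det = 1 →
        v (g.mulVec x) = g.mulVec (v x)) :
    ∀ x : Fin 3 → ℝ, (∑ j, (x j) ^ 2) = 1 → v x = 0 := by
  intro x hx
  have hxs : x 0 ^ 2 + x 1 ^ 2 + x 2 ^ 2 = 1 := by
    simpa [Fin.sum_univ_three] using hx
  set g : Matrix (Fin 3) (Fin 3) ℝ :=
    Matrix.of (fun i j => 2 * x i * x j - if i = j then (1:ℝ) else 0) with hg
  have hgt : g.transpose * g = 1 := by
    ext i j
    fin_cases i <;> fin_cases j <;>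
      simp [hg, Matrix.mul_apply, Matrix.transpose_apply, Fin.sum_univ_three,
        Matrix.one_apply] <;>
      first
        | linear_combination 4 * x 0 * x 0 * hxs
        | linear_combination 4 * x 0 * x 1 * hxs
        | linear_combination 4 * x 0 * x 2 * hxs
        | linear_combination 4 * x 1 * x 1 * hxs
        | linear_combination 4 * x 1 * x 2 * hxs
        | linear_combination 4 * x 2 * x 2 * hxs
  have hdet : g.det = 1 := by
    rw [Matrix.det_fin_three]
    simp only [hg, Matrix.of_apply, Fin.ext_iff]
    norm_num
    linear_combination 2 * hxs
  have hgx : g.mulVec x = x := by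
    ext i
    fin_cases i <;>
      simp [hg, Matrix.mulVec, dotProduct, Fin.sum_univ_three] <;>
      first
        | linear_combination 2 * x 0 * hxs
        | linear_combination 2 * x 1 * hxs
        | linear_combination 2 * x 2 * hxs
  have ht3 : v x 0 * x 0 + v x 1 * x 1 + v x 2 * x 2 = 0 := by
    simpa [Fin.sum_univ_three] using htang x hx
  have he := hequiv x hx g hgt hdet
  rw [hgx] at he
  ext i
  have hi := congrFun he i
  fin_cases i <;>
    simp [hg, Matrix.mulVec, dotProduct, Fin.sum_univ_three] at hi ⊢ <;>
    first
      | linear_combination hi / 2 + x 0 * ht3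
      | linear_combination hi / 2 + x 1 * ht3
      | linear_combination hi / 2 + x 2 * ht3
end

section
/- Let f : ℝ² \ {0} → ℝ² be continuously differentiable such that for every 2×2 real matrix l with trace l = 0 and every X ∈ ℝ² \ {0}, the Fréchet derivative of f at X evaluated at l·X equals l·f(X). Then there exists α ∈ ℝ such that f(X) = α·X for every X ∈ ℝ² \ {0}. -/
/-!
The nilpotent trace-zero matrices `X wᵀ` with `w ⊥ X` kill `X`, so equivariance forces them to
kill `f X`; hence `f X = a X • X` with `a X = ⟨X, f X⟩ / ‖X‖²`. For `X ≠ 0` the vectors `l X`,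
`l ∈ sl(2,ℝ)`, fill the plane, and equivariance then says `Df(X) = a X • id`. Comparing with the
product rule for `a • id` gives `Da(X) v • X = 0`, so `Da = 0` and `a` is constant on the
connected punctured plane.
-/

open Matrix

section TraceZero

variable {n : Type*} [Fintype n]

theorem eq_smul_of_forall_trace_eq_zero {X y : n → ℝ} (hX : X ≠ 0)
    (h : ∀ l : Matrix n n ℝ, l.trace = 0 → l *ᵥ X = 0 → l *ᵥ y = 0) :
    y = ((X ⬝ᵥ y) / (X ⬝ᵥ X)) • X := by
  set c := (X ⬝ᵥ y) / (X ⬝ᵥ X)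
  set w := y - c • X with hw
  have hXX : X ⬝ᵥ X ≠ 0 := fun h0 => hX (dotProduct_self_eq_zero.mp h0)
  have hwX : w ⬝ᵥ X = 0 := by
    simp only [w, c, sub_dotProduct, smul_dotProduct, smul_eq_mul, dotProduct_comm y]
    field_simp
    ring
  have hwy : w ⬝ᵥ y = 0 := by
    have := h (vecMulVec X w) (by rw [trace_vecMulVec, dotProduct_comm, hwX])
      (by rw [vecMulVec_mulVec, hwX]; simp)
    rw [vecMulVec_mulVec] at this
    simpa [hX] using this
  have hww : w ⬝ᵥ w = 0 :=
    calc w ⬝ᵥ w = w ⬝ᵥ y - c * (w ⬝ᵥ X) := by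
          nth_rewrite 2 [hw]; rw [dotProduct_sub, dotProduct_smul, smul_eq_mul]
      _ = 0 := by rw [hwy, hwX]; ring
  exact sub_eq_zero.mp (dotProduct_self_eq_zero.mp hww)

theorem exists_trace_eq_zero_mulVec_eq {X w : n → ℝ} (hX : X ≠ 0) (hw : w ≠ 0)
    (hwX : w ⬝ᵥ X = 0) (v : n → ℝ) : ∃ l : Matrix n n ℝ, l.trace = 0 ∧ l *ᵥ X = v := by
  have hXX : X ⬝ᵥ X ≠ 0 := fun h0 => hX (dotProduct_self_eq_zero.mp h0)
  have hww : w ⬝ᵥ w ≠ 0 := fun h0 => hw (dotProduct_self_eq_zero.mp h0)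
  -- `v Xᵀ / ‖X‖²` sends `X` to `v`; the multiple of `w wᵀ` kills `X` and cancels the trace.
  refine ⟨(X ⬝ᵥ X)⁻¹ • vecMulVec v X - ((v ⬝ᵥ X) / ((X ⬝ᵥ X) * (w ⬝ᵥ w))) • vecMulVec w w,
    ?_, ?_⟩
  · simp only [trace_sub, trace_smul, trace_vecMulVec, smul_eq_mul]
    field_simp
    ring
  · simp only [sub_mulVec, smul_mulVec, vecMulVec_mulVec, hwX]
    simp [hXX]

end TraceZero

theorem fderiv_apply_eq_zero_of_fderiv_smul_id {E : Type*} [NormedAddCommGroup E]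
    [NormedSpace ℝ E] {a : E → ℝ} {x v : E} (ha : DifferentiableAt ℝ a x) (hx : x ≠ 0)
    (h : fderiv ℝ (fun y => a y • y) x v = a x • v) : fderiv ℝ a x v = 0 := by
  rw [fderiv_fun_smul (f := fun y => y) ha differentiableAt_fun_id] at h
  simpa [hx] using h

section Equivariant

variable {n : Type*} [Fintype n]

def SlEquivariant (f : (n → ℝ) → n → ℝ) : Prop :=
  ∀ l : Matrix n n ℝ, l.trace = 0 → ∀ X : n → ℝ, X ≠ 0 → fderiv ℝ f X (l *ᵥ X) = l *ᵥ f X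

noncomputable def radialCoeff (f : (n → ℝ) → n → ℝ) (X : n → ℝ) : ℝ :=
  (X ⬝ᵥ f X) / (X ⬝ᵥ X)

variable {f : (n → ℝ) → n → ℝ}

theorem SlEquivariant.eq_radialCoeff_smul (h : SlEquivariant f) {X : n → ℝ} (hX : X ≠ 0) :
    f X = radialCoeff f X • X :=
  eq_smul_of_forall_trace_eq_zero hX fun l hl hlX => by rw [← h l hl X hX, hlX, map_zero]

theorem differentiableOn_radialCoeff (hf : DifferentiableOn ℝ f {X | X ≠ 0}) :
    DifferentiableOn ℝ (radialCoeff f) {X | X ≠ 0} := by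
  intro X hX
  have hXX : X ⬝ᵥ X ≠ 0 := fun h0 => hX (dotProduct_self_eq_zero.mp h0)
  have := hf X hX
  unfold radialCoeff
  simp only [dotProduct] at hXX ⊢
  fun_prop (disch := assumption)

end Equivariant

theorem SlEquivariant.fderiv_radialCoeff {f : (Fin 2 → ℝ) → Fin 2 → ℝ} (h : SlEquivariant f)
    (hf : DifferentiableOn ℝ f {X | X ≠ 0}) {X : Fin 2 → ℝ} (hX : X ≠ 0) :
    fderiv ℝ (radialCoeff f) X = 0 := by
  have hs : {X : Fin 2 → ℝ | X ≠ 0} ∈ nhds X := isOpen_ne.mem_nhds hX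
  have hfa : f =ᶠ[nhds X] fun Y => radialCoeff f Y • Y :=
    Filter.mem_of_superset hs fun Y hY => h.eq_radialCoeff_smul hY
  have hw : ![-X 1, X 0] ≠ 0 := fun h0 => hX <| by
    ext i; fin_cases i
    · simpa using congrFun h0 1
    · simpa using congrFun h0 0
  have hwX : ![-X 1, X 0] ⬝ᵥ X = 0 := by simp [dotProduct, Fin.sum_univ_two]; ring
  ext1 v
  obtain ⟨l, hl, rfl⟩ := exists_trace_eq_zero_mulVec_eq hX hw hwX v
  refine fderiv_apply_eq_zero_of_fderiv_smul_id
    ((differentiableOn_radialCoeff hf).differentiableAt hs) hX ?_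
  rw [← hfa.fderiv_eq, h l hl X hX, h.eq_radialCoeff_smul hX, mulVec_smul]

/-- If `f : ℝ² \ {0} → ℝ²` is continuously differentiable and
equivariant with respect to every trace-zero matrix `l` (the Lie algebra
`sl(2,ℝ)`): `Df(X)(l·X) = l·f(X)` for all `X ≠ 0`, then `f(X) = α • X` for some
constant `α ∈ ℝ`. -/
theorem stmt_16 (f : (Fin 2 → ℝ) → (Fin 2 → ℝ))
    (hf : ContDiffOn ℝ 1 f {X : Fin 2 → ℝ | X ≠ 0})
    (hequiv : ∀ l : Matrix (Fin 2) (Fin 2) ℝ, l.trace = 0 →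
      ∀ X : Fin 2 → ℝ, X ≠ 0 →
        fderiv ℝ f X (l.mulVec X) = l.mulVec (f X)) :
    ∃ α : ℝ, ∀ X : Fin 2 → ℝ, X ≠ 0 → f X = α • X := by
  have hequiv : SlEquivariant f := hequiv
  have hdiff := hf.differentiableOn one_ne_zero
  have hconn : IsPreconnected {X : Fin 2 → ℝ | X ≠ 0} :=
    (isConnected_compl_singleton_of_one_lt_rank (by rw [rank_fin_fun]; norm_num) 0).isPreconnected
  obtain ⟨α, hα⟩ := isOpen_ne.exists_is_const_of_fderiv_eq_zero hconn
    (differentiableOn_radialCoeff hdiff) fun X hX => hequiv.fderiv_radialCoeff hdiff hX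
  exact ⟨α, fun X hX => by rw [hequiv.eq_radialCoeff_smul hX, hα X hX]⟩
end

section
/- Let N ≥ 2 and let U = {(X_1,…,X_N) ∈ (ℝ²)^N : X_1 and X_2 are linearly independent}. For X ∈ U denote by [X_1|X_2] the 2×2 real matrix whose columns are X_1 and X_2 (which is invertible on U), and by det[X_1|X_2] its determinant. Then a function ψ : U → ℝ satisfies ψ(g·X_1, …, g·X_N) = ψ(X_1, …, X_N) for every g ∈ SL(2,ℝ) and every X ∈ U, if and only if there exists a function φ : (ℝ \ {0}) × (ℝ²)^(N−2) → ℝ such that ψ(X_1,…,X_N) = φ( det[X_1|X_2], [X_1|X_2]⁻¹·X_3, …, [X_1|X_2]⁻¹·X_N ) for every X ∈ U. -/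
namespace Stmt17Aux

/-- matrix with columns `u`, `v` -/
def cmat (u v : Fin 2 → ℝ) : Matrix (Fin 2) (Fin 2) ℝ :=
  Matrix.of ![![u 0, v 0], ![u 1, v 1]]

lemma cmat_eq_transpose (u v : Fin 2 → ℝ) :
    cmat u v = (Matrix.of ![u, v]).transpose := by
  ext i j
  fin_cases i <;> fin_cases j <;> rfl

lemma li_iff (u v : Fin 2 → ℝ) :
    LinearIndependent ℝ ![u, v] ↔ (cmat u v).det ≠ 0 := by
  rw [cmat_eq_transpose, Matrix.det_transpose, ← isUnit_iff_ne_zero,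
    ← Matrix.isUnit_iff_isUnit_det]
  exact Matrix.linearIndependent_rows_iff_isUnit

lemma cmat_mulVec_e0 (u v : Fin 2 → ℝ) : (cmat u v).mulVec ![1, 0] = u := by
  funext i
  fin_cases i <;>
    simp [cmat, Matrix.mulVec, dotProduct, Fin.sum_univ_two]

lemma cmat_mulVec_e1 (u v : Fin 2 → ℝ) : (cmat u v).mulVec ![0, 1] = v := by
  funext i
  fin_cases i <;>
    simp [cmat, Matrix.mulVec, dotProduct, Fin.sum_univ_two]

lemma cmat_g (g : Matrix (Fin 2) (Fin 2) ℝ) (u v : Fin 2 → ℝ) :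
    cmat (g.mulVec u) (g.mulVec v) = g * cmat u v := by
  ext i j
  fin_cases i <;> fin_cases j <;>
    simp [cmat, Matrix.mulVec, dotProduct, Matrix.mul_apply,
      Fin.sum_univ_two]

end Stmt17Aux

open Stmt17Aux in
/-- Let `N = M + 2 ≥ 2` and `U` the set of `X ∈ (ℝ²)^N` with
`X_1, X_2` linearly independent. A function `ψ` is invariant under the diagonal
action of `SL(2,ℝ)` on `U` if and only if it factors through the complete set of
invariants `det[X_1|X_2]` and `[X_1|X_2]⁻¹·X_i` for `i ≥ 3`, where `[X_1|X_2]`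
is the matrix with columns `X_1` and `X_2`. -/
theorem stmt_17 (M : ℕ) (ψ : (Fin (M + 2) → Fin 2 → ℝ) → ℝ) :
    (∀ X : Fin (M + 2) → Fin 2 → ℝ, LinearIndependent ℝ ![X 0, X 1] →
      ∀ g : Matrix (Fin 2) (Fin 2) ℝ, g.det = 1 →
        ψ (fun i => g.mulVec (X i)) = ψ X) ↔
    (∃ φ : ℝ → (Fin M → Fin 2 → ℝ) → ℝ,
      ∀ X : Fin (M + 2) → Fin 2 → ℝ, LinearIndependent ℝ ![X 0, X 1] →
        ψ X = φ (Matrix.det (Matrix.of ![![X 0 0, X 1 0], ![X 0 1, X 1 1]]))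
          (fun i : Fin M =>
            (Matrix.of ![![X 0 0, X 1 0], ![X 0 1, X 1 1]] :
              Matrix (Fin 2) (Fin 2) ℝ)⁻¹.mulVec (X i.succ.succ))) := by
  constructor
  · -- invariance → factorization
    intro h
    refine ⟨fun d Z => ψ (fun i => (!![1, 0; 0, d] : Matrix (Fin 2) (Fin 2) ℝ).mulVec
      ((Fin.cons ![1, 0] (Fin.cons ![0, 1] Z) : Fin (M + 2) → Fin 2 → ℝ) i)), ?_⟩
    intro X hX
    set B : Matrix (Fin 2) (Fin 2) ℝ := cmat (X 0) (X 1) with hB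
    have hd : B.det ≠ 0 := (li_iff (X 0) (X 1)).1 hX
    set d : ℝ := B.det with hdd
    set Z : Fin M → Fin 2 → ℝ := fun i => B⁻¹.mulVec (X i.succ.succ) with hZ
    set D : Matrix (Fin 2) (Fin 2) ℝ := !![1, 0; 0, d] with hD
    have hDdet : D.det = d := by simp [hD]
    have hDne : D.det ≠ 0 := by rw [hDdet]; exact hd
    set W : Fin (M + 2) → Fin 2 → ℝ := Fin.cons ![1, 0] (Fin.cons ![0, 1] Z) with hW
    set Y : Fin (M + 2) → Fin 2 → ℝ := fun i => D.mulVec (W i) with hY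
    have hgB : IsUnit B.det := isUnit_iff_ne_zero.2 hd
    have hgD : IsUnit D.det := isUnit_iff_ne_zero.2 hDne
    set g : Matrix (Fin 2) (Fin 2) ℝ := B * D⁻¹ with hg
    have hgdet : g.det = 1 := by
      rw [hg, Matrix.det_mul, Matrix.det_nonsing_inv, hDdet, ← hdd,
        Ring.inverse_eq_inv, mul_inv_cancel₀ hd]
    have hGY : (fun i => g.mulVec (Y i)) = X := by
      funext i
      have key : g.mulVec (Y i) = B.mulVec (W i) := by
        rw [hY, hg]
        rw [Matrix.mulVec_mulVec, Matrix.mul_assoc, Matrix.nonsing_inv_mul D hgD,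
          Matrix.mul_one]
      rw [key]
      refine Fin.cases ?_ (fun j => ?_) i
      · rw [hW]
        simp only [Fin.cons_zero]
        exact cmat_mulVec_e0 (X 0) (X 1)
      · refine Fin.cases ?_ (fun k => ?_) j
        · rw [hW]
          simp only [Fin.cons_succ, Fin.cons_zero]
          have := cmat_mulVec_e1 (X 0) (X 1)
          rw [← hB] at this
          rw [this]
          rfl
        · rw [hW]
          simp only [Fin.cons_succ]
          rw [hZ]
          rw [Matrix.mulVec_mulVec, Matrix.mul_nonsing_inv B hgB, Matrix.one_mulVec]
    have hYli : LinearIndependent ℝ ![Y 0, Y 1] := by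
      rw [li_iff]
      have h0 : Y 0 = ![1, 0] := by
        rw [hY]
        simp only [hW, Fin.cons_zero]
        funext i
        fin_cases i <;>
          simp [hD, Matrix.mulVec, dotProduct, Fin.sum_univ_two]
      have h1 : Y 1 = ![0, d] := by
        have : (1 : Fin (M + 2)) = Fin.succ 0 := rfl
        rw [hY]
        rw [this]
        simp only [hW, Fin.cons_succ, Fin.cons_zero]
        funext i
        fin_cases i <;>
          simp [hD, Matrix.mulVec, dotProduct, Fin.sum_univ_two]
      rw [h0, h1]
      have : cmat ![1, 0] ![0, d] = !![1, 0; 0, d] := by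
        ext i j
        fin_cases i <;> fin_cases j <;> rfl
      rw [this]
      simpa using hd
    have := h Y hYli g hgdet
    rw [hGY] at this
    rw [this]
    rfl
  · -- factorization → invariance
    rintro ⟨φ, h⟩ X hX g hgdet
    have hgu : IsUnit g.det := by rw [hgdet]; exact isUnit_one
    set B : Matrix (Fin 2) (Fin 2) ℝ := cmat (X 0) (X 1) with hB
    have hd : B.det ≠ 0 := (li_iff (X 0) (X 1)).1 hX
    set Y : Fin (M + 2) → Fin 2 → ℝ := fun i => g.mulVec (X i) with hYdef
    have hBY : cmat (Y 0) (Y 1) = g * B := cmat_g g (X 0) (X 1)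
    have hYli : LinearIndependent ℝ ![Y 0, Y 1] := by
      rw [li_iff, hBY, Matrix.det_mul, hgdet, one_mul]
      exact hd
    have hy := h Y hYli
    have hx := h X hX
    have hdets : (cmat (Y 0) (Y 1)).det = B.det := by
      rw [hBY, Matrix.det_mul, hgdet, one_mul]
    have hinvs : ∀ k : Fin M,
        (cmat (Y 0) (Y 1))⁻¹.mulVec (Y k.succ.succ) = B⁻¹.mulVec (X k.succ.succ) := by
      intro k
      rw [hBY, Matrix.mul_inv_rev]
      show (B⁻¹ * g⁻¹).mulVec (g.mulVec (X k.succ.succ)) = _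
      rw [Matrix.mulVec_mulVec, Matrix.mul_assoc, Matrix.nonsing_inv_mul g hgu,
        Matrix.mul_one]
    show ψ Y = ψ X
    rw [hy, hx]
    have e1 : (Matrix.det (Matrix.of ![![Y 0 0, Y 1 0], ![Y 0 1, Y 1 1]])) =
        (Matrix.det (Matrix.of ![![X 0 0, X 1 0], ![X 0 1, X 1 1]])) := hdets
    have e2 : (fun k : Fin M =>
        (Matrix.of ![![Y 0 0, Y 1 0], ![Y 0 1, Y 1 1]] :
          Matrix (Fin 2) (Fin 2) ℝ)⁻¹.mulVec (Y k.succ.succ)) =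
        (fun k : Fin M =>
        (Matrix.of ![![X 0 0, X 1 0], ![X 0 1, X 1 1]] :
          Matrix (Fin 2) (Fin 2) ℝ)⁻¹.mulVec (X k.succ.succ)) := by
      funext k; exact hinvs k
    rw [e1, e2]
end

section
/- Let J be the 2×2 matrix with rows (0, −1) and (1, 0), and for θ ∈ ℝ let R(θ) be the rotation matrix with rows (cos θ, −sin θ) and (sin θ, cos θ). Let f : ℝ² \ {0} → ℝ² be continuous and satisfy f(R(θ)·X) = R(θ)·f(X) for every θ ∈ ℝ and every X ∈ ℝ² \ {0}. Then there exist continuous functions φ, ψ : (0, ∞) → ℝ such that f(X) = φ(‖X‖)·X + ψ(‖X‖)·J·X for every X ∈ ℝ² \ {0}, where ‖·‖ is the Euclidean norm. -/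
/-!
Polar coordinates write every `X ≠ 0` as `R(θ)·(r, 0)` with `r = ‖X‖`, so equivariance gives
`f X = R(θ)·f(r, 0)`. Since `(r, 0)` and `J·(r, 0)` form a basis, `f(r, 0) = φ(r)•(r, 0) + ψ(r)•J·(r, 0)`
with `φ, ψ` read off the coordinates of `f(r, 0)`, and because `R(θ)` commutes with `J` this
decomposition is carried to `f X = φ(r)•X + ψ(r)•J·X`.
-/

open Matrix Real

noncomputable def rotMatrix (θ : ℝ) : Matrix (Fin 2) (Fin 2) ℝ := !![cos θ, -sin θ; sin θ, cos θ]

def jMatrix : Matrix (Fin 2) (Fin 2) ℝ := !![0, -1; 1, 0]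

theorem commute_rotMatrix_jMatrix (θ : ℝ) : Commute (rotMatrix θ) jMatrix := by
  ext i j; fin_cases i <;> fin_cases j <;> simp [rotMatrix, jMatrix]

theorem rotMatrix_arg_mulVec (X : Fin 2 → ℝ) :
    rotMatrix (Complex.arg ⟨X 0, X 1⟩) *ᵥ ![√(X 0 ^ 2 + X 1 ^ 2), 0] = X := by
  have hnorm : ‖(⟨X 0, X 1⟩ : ℂ)‖ = √(X 0 ^ 2 + X 1 ^ 2) := by
    rw [Complex.norm_def, Complex.normSq_mk]; ring_nf
  have hcos := Complex.norm_mul_cos_arg ⟨X 0, X 1⟩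
  have hsin := Complex.norm_mul_sin_arg ⟨X 0, X 1⟩
  rw [hnorm] at hcos hsin
  ext i; fin_cases i <;> simp [rotMatrix, mulVec, dotProduct, Fin.sum_univ_two] <;> linarith

theorem Commute.mulVec_smul_add_smul_mulVec {n R : Type*} [Fintype n] [DecidableEq n] [CommRing R]
    {A J : Matrix n n R} (h : Commute A J) (a b : R) (x : n → R) :
    A *ᵥ (a • x + b • J *ᵥ x) = a • A *ᵥ x + b • J *ᵥ (A *ᵥ x) := by
  rw [mulVec_add, mulVec_smul, mulVec_smul, mulVec_mulVec, h.eq, ← mulVec_mulVec]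

theorem eq_smul_add_smul_jMatrix_mulVec {r : ℝ} (hr : r ≠ 0) (v : Fin 2 → ℝ) :
    v = (v 0 / r) • ![r, 0] + (v 1 / r) • jMatrix *ᵥ ![r, 0] := by
  ext i; fin_cases i <;> simp [jMatrix, hr]

theorem continuousOn_comp_vecCons_zero {β : Type*} [TopologicalSpace β] {f : (Fin 2 → ℝ) → β}
    (hf : ContinuousOn f {X | X ≠ 0}) : ContinuousOn (fun r : ℝ => f ![r, 0]) (Set.Ioi 0) :=
  hf.comp (by fun_prop) fun _ hr h => (Set.mem_Ioi.mp hr).ne' (congrFun h 0)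

/-- Let `J = [[0,−1],[1,0]]` and `R(θ)` the rotation matrix of
angle `θ`. If `f : ℝ² \ {0} → ℝ²` is continuous and `SO(2,ℝ)`-equivariant
(`f(R(θ)·X) = R(θ)·f(X)`), then `f(X) = φ(‖X‖)•X + ψ(‖X‖)•J·X` with continuous
`φ, ψ : (0,∞) → ℝ`, where `‖X‖ = √(X_1² + X_2²)` is the Euclidean norm. -/
theorem stmt_18
    (J : Matrix (Fin 2) (Fin 2) ℝ) (hJ : J = Matrix.of ![![0, -1], ![1, 0]])
    (R : ℝ → Matrix (Fin 2) (Fin 2) ℝ)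
    (hR : ∀ θ, R θ = Matrix.of ![![Real.cos θ, -Real.sin θ], ![Real.sin θ, Real.cos θ]])
    (f : (Fin 2 → ℝ) → (Fin 2 → ℝ))
    (hf : ContinuousOn f {X : Fin 2 → ℝ | X ≠ 0})
    (hequiv : ∀ θ : ℝ, ∀ X : Fin 2 → ℝ, X ≠ 0 →
      f ((R θ).mulVec X) = (R θ).mulVec (f X)) :
    ∃ φ ψ : ℝ → ℝ,
      ContinuousOn φ (Set.Ioi 0) ∧ ContinuousOn ψ (Set.Ioi 0) ∧
      ∀ X : Fin 2 → ℝ, X ≠ 0 →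
        f X = φ (Real.sqrt ((X 0) ^ 2 + (X 1) ^ 2)) • X
              + ψ (Real.sqrt ((X 0) ^ 2 + (X 1) ^ 2)) • J.mulVec X := by
  obtain rfl : J = jMatrix := hJ
  obtain rfl : R = rotMatrix := funext hR
  have hg := continuousOn_comp_vecCons_zero hf
  refine ⟨fun r => f ![r, 0] 0 / r, fun r => f ![r, 0] 1 / r,
    ((continuous_apply 0).comp_continuousOn hg).div continuousOn_id fun r hr => hr.ne',
    ((continuous_apply 1).comp_continuousOn hg).div continuousOn_id fun r hr => hr.ne',
    fun X hX => ?_⟩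
  set r := √(X 0 ^ 2 + X 1 ^ 2)
  set θ := Complex.arg ⟨X 0, X 1⟩
  have hpolar : rotMatrix θ *ᵥ ![r, 0] = X := rotMatrix_arg_mulVec X
  have hr : r ≠ 0 := fun h => hX (by rw [← hpolar, h]; simp)
  calc f X = rotMatrix θ *ᵥ f ![r, 0] := by
        rw [← hpolar, hequiv θ _ fun h => hr (congrFun h 0)]
    _ = rotMatrix θ *ᵥ
          ((f ![r, 0] 0 / r) • ![r, 0] + (f ![r, 0] 1 / r) • jMatrix *ᵥ ![r, 0]) := by
        rw [← eq_smul_add_smul_jMatrix_mulVec hr]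
    _ = _ := by
        rw [(commute_rotMatrix_jMatrix θ).mulVec_smul_add_smul_mulVec, hpolar]
end

section
/- Let n ≥ 1, let A be a skew-symmetric n×n real matrix (Aᵀ = −A), and let φ : ℝⁿ → ℝ be twice continuously differentiable such that Dφ(x)(A·x) = 0 for every x ∈ ℝⁿ. Let ∇φ : ℝⁿ → ℝⁿ denote the gradient of φ with respect to the standard Euclidean inner product, i.e. ⟨∇φ(x), v⟩ = Dφ(x)(v) for all x, v. Then the gradient field is equivariant with respect to the infinitesimal rotation A: for every x ∈ ℝⁿ, D(∇φ)(x)(A·x) = A·(∇φ(x)). -/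
/-!
Differentiating the identity `Dφ(y)(A y) = 0` at `x` in the direction `w` gives
`D²φ(x)(w, A x) + Dφ(x)(A w) = 0`. By symmetry of `D²φ(x)`, the left term is the derivative of
`∇φ` along `A x`, paired with `w`, and skew-symmetry turns `-⟨∇φ(x), A w⟩` into `⟨A ∇φ(x), w⟩`.
-/

open Matrix

theorem fderiv_apply_eq_fderiv_clm_apply {𝕜 E F ι : Type*} [NontriviallyNormedField 𝕜]
    [NormedAddCommGroup E] [NormedSpace 𝕜 E] [NormedAddCommGroup F] [NormedSpace 𝕜 F]
    {Φ : E → E →L[𝕜] F} {g : E → ι → F} {b : ι → E} (hg : ∀ y i, g y i = Φ y (b i)) {x : E}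
    (hΦ : DifferentiableAt 𝕜 Φ x) (u : E) (i : ι) :
    fderiv 𝕜 g x u i = fderiv 𝕜 Φ x u (b i) := by
  obtain rfl : g = fun y i => Φ y (b i) := funext₂ hg
  rw [fderiv_pi fun i => hΦ.clm_apply (differentiableAt_const _)]
  simp [fderiv_clm_apply hΦ (differentiableAt_const _)]

theorem fderiv_fderiv_apply_eq_neg_of_fderiv_apply_map_eq_zero {E F : Type*}
    [NormedAddCommGroup E] [NormedSpace ℝ E] [NormedAddCommGroup F] [NormedSpace ℝ F]
    {φ : E → F} {x : E} (hφ : ContDiffAt ℝ 2 φ x) (L : E →L[ℝ] E)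
    (hL : ∀ y, fderiv ℝ φ y (L y) = 0) (w : E) :
    fderiv ℝ (fderiv ℝ φ) x (L x) w = -fderiv ℝ φ x (L w) := by
  have hdiff : DifferentiableAt ℝ (fderiv ℝ φ) x :=
    (hφ.fderiv_right (m := 1) le_rfl).differentiableAt one_ne_zero
  have hzero : fderiv ℝ (fun y => fderiv ℝ φ y (L y)) x w = 0 := by
    simp [funext hL]
  rw [fderiv_clm_apply hdiff L.differentiableAt] at hzero
  simp only [ContinuousLinearMap.fderiv, _root_.add_apply, ContinuousLinearMap.comp_apply,
    ContinuousLinearMap.flip_apply] at hzero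
  rw [(hφ.isSymmSndFDerivAt (by simp)).eq]
  exact eq_neg_of_add_eq_zero_right hzero

theorem Matrix.dotProduct_mulVec_eq_neg_of_transpose_eq_neg {n R : Type*} [Fintype n]
    [CommRing R] {A : Matrix n n R} (hA : Aᵀ = -A) (v w : n → R) :
    v ⬝ᵥ (A *ᵥ w) = -((A *ᵥ v) ⬝ᵥ w) := by
  rw [dotProduct_mulVec, ← mulVec_transpose, hA, neg_mulVec, neg_dotProduct]

theorem stmt_19_general (n : ℕ)
    (A : Matrix (Fin n) (Fin n) ℝ) (hA : A.transpose = -A)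
    (φ : (Fin n → ℝ) → ℝ) (hφ : ContDiff ℝ 2 φ)
    (hrad : ∀ x : Fin n → ℝ, fderiv ℝ φ x (A.mulVec x) = 0)
    (g : (Fin n → ℝ) → (Fin n → ℝ))
    (hg : ∀ x v : Fin n → ℝ, (∑ j, g x j * v j) = fderiv ℝ φ x v) :
    ∀ x : Fin n → ℝ, fderiv ℝ g x (A.mulVec x) = A.mulVec (g x) := by
  intro x
  ext j
  have hg_single : ∀ y j, g y j = fderiv ℝ φ y (Pi.single j 1) := fun y j => by
    rw [← hg, ← dotProduct, dotProduct_single_one]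
  have hdiff : DifferentiableAt ℝ (fderiv ℝ φ) x :=
    (hφ.fderiv_right (m := 1) le_rfl).differentiable one_ne_zero x
  have hrad' := fderiv_fderiv_apply_eq_neg_of_fderiv_apply_map_eq_zero (hφ.contDiffAt (x := x))
    (LinearMap.toContinuousLinearMap A.mulVecLin) hrad (Pi.single j 1)
  simp only [LinearMap.coe_toContinuousLinearMap', mulVecLin_apply] at hrad'
  rw [fderiv_apply_eq_fderiv_clm_apply hg_single hdiff, hrad', ← hg, ← dotProduct,
    dotProduct_mulVec_eq_neg_of_transpose_eq_neg hA, neg_neg, dotProduct_single_one]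

/-- Let `A` be a skew-symmetric `n × n` real matrix and
`φ : ℝⁿ → ℝ` a `C²` function with `Dφ(x)(A·x) = 0` for all `x` (radiality). Let
`g = ∇φ` be the Euclidean gradient of `φ`, characterized by
`⟨g(x), v⟩ = Dφ(x)(v)`. Then the gradient field is equivariant for `A`:
`Dg(x)(A·x) = A·g(x)` for every `x`. -/
theorem stmt_19 (n : ℕ) (hn : 1 ≤ n)
    (A : Matrix (Fin n) (Fin n) ℝ) (hA : A.transpose = -A)
    (φ : (Fin n → ℝ) → ℝ) (hφ : ContDiff ℝ 2 φ)
    (hrad : ∀ x : Fin n → ℝ, fderiv ℝ φ x (A.mulVec x) = 0)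
    (g : (Fin n → ℝ) → (Fin n → ℝ))
    (hg : ∀ x v : Fin n → ℝ, (∑ j, g x j * v j) = fderiv ℝ φ x v) :
    ∀ x : Fin n → ℝ, fderiv ℝ g x (A.mulVec x) = A.mulVec (g x) :=
  stmt_19_general n A hA φ hφ hrad g hg
end
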